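/- arXiv:0712.2323 — 4 statements merged into one kernel-verified Lean document; each statement's English description precedes it below -/
import Mathlib

section
/- Assume a is a regular endpoint. Fix λ ∈ ℝ, x ∈ (a,b) and ε > 0, and let c and s be the real-valued solutions of τu = λu with c(a) = 1, (pc')(a) = 0 and s(a) = 0, (ps')(a) = 1. If m ∈ ℂ and u is a complex-valued solution of τu = (λ + iε)u on (a,b) with u(a) = 1 and (pu')(a) = m, then ‖c + m s‖_(a,x) ≤ (1 + 2 ε ‖s‖_(a,x) ‖c‖_(a,x)) ‖u‖_(a,x). -/
open MeasureTheory Set Filter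

/-- The weighted `L²` norm `‖f‖_(a,x) = (∫_a^x ‖f(t)‖² r(t) dt)^{1/2}`. -/
noncomputable def slNorm {E : Type*} [NormedAddCommGroup E] (r : ℝ → ℝ) (a x : ℝ)
    (f : ℝ → E) : ℝ :=
  Real.sqrt (∫ t in a..x, ‖f t‖ ^ 2 * r t)

/-- `u` (with quasi-derivative `du = p u'`) is a solution of `τ u = z u` on `S` with
regular endpoint `a`, expressed in integrated form. -/
def IsSolutionFrom (p q r : ℝ → ℝ) (a : ℝ) (S : Set ℝ) (z : ℂ) (u du : ℝ → ℂ) : Prop :=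
  ContinuousOn u (insert a S) ∧ ContinuousOn du (insert a S) ∧
  (∀ x ∈ S, u x = u a + ∫ t in a..x, du t / (p t : ℂ)) ∧
  (∀ x ∈ S, du x = du a + ∫ t in a..x, ((q t : ℂ) - z * (r t : ℂ)) * u t)

/-- Real-valued version of `IsSolutionFrom`. -/
def IsSolutionFromReal (p q r : ℝ → ℝ) (a : ℝ) (S : Set ℝ) (lam : ℝ) (u du : ℝ → ℝ) : Prop :=
  ContinuousOn u (insert a S) ∧ ContinuousOn du (insert a S) ∧
  (∀ x ∈ S, u x = u a + ∫ t in a..x, du t / p t) ∧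
  (∀ x ∈ S, du x = du a + ∫ t in a..x, (q t - lam * r t) * u t)

/-!
Subtracting Wronskians of `c`, `s`, `u` (Lagrange's identity) gives the variation-of-constants
formula `c + m s = u + iε (s ∫ₐᵗ r c u - c ∫ₐᵗ r s u)`. Cauchy–Schwarz in `L²((a,x), r dt)` bounds
the two integrals by `‖c‖ ‖u‖` and `‖s‖ ‖u‖`, and Minkowski's inequality in the same space turns the
resulting pointwise bound `|c + m s| ≤ |u| + ε ‖s‖ ‖u‖ |c| + ε ‖c‖ ‖u‖ |s|` into the claim.
-/

section ProductRule

variable {𝕜 : Type*} [RCLike 𝕜] {a x : ℝ}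

theorem integral_mul_integral_eq_add {φ ψ : ℝ → 𝕜} (hax : a ≤ x)
    (hφ : IntervalIntegrable φ volume a x) (hψ : IntervalIntegrable ψ volume a x) :
    (∫ s in a..x, φ s) * (∫ s in a..x, ψ s) =
      (∫ s in a..x, (∫ τ in a..s, φ τ) * ψ s) + ∫ s in a..x, φ s * ∫ τ in a..s, ψ τ := by
  -- Fubini on `(a, x]²`, with the square split along the diagonal.
  set ν := volume.restrict (Ioc a x)
  set T := {z : ℝ × ℝ | z.1 ≤ z.2}
  have hT : MeasurableSet T := measurableSet_le measurable_fst measurable_snd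
  have hprod : Integrable (fun z : ℝ × ℝ => φ z.1 * ψ z.2) (ν.prod ν) := hφ.1.mul_prod hψ.1
  have hlower : ∫ z, T.indicator (fun z => φ z.1 * ψ z.2) z ∂(ν.prod ν)
      = ∫ s in a..x, (∫ τ in a..s, φ τ) * ψ s := by
    rw [integral_prod_symm _ (hprod.indicator hT), intervalIntegral.integral_of_le hax]
    refine setIntegral_congr_fun measurableSet_Ioc fun s hs => ?_
    have hset : Iic s ∩ Ioc a x = Ioc a s := by
      ext τ; simp only [mem_inter_iff, mem_Iic, mem_Ioc]
      exact ⟨fun h => ⟨h.2.1, h.1⟩, fun h => ⟨h.2, h.1, h.2.trans hs.2⟩⟩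
    change ∫ τ, (Iic s).indicator (fun τ => φ τ * ψ s) τ ∂ν = _
    rw [integral_indicator measurableSet_Iic, Measure.restrict_restrict measurableSet_Iic, hset,
      integral_mul_const, intervalIntegral.integral_of_le hs.1.le]
  have hupper : ∫ z, Tᶜ.indicator (fun z => φ z.1 * ψ z.2) z ∂(ν.prod ν)
      = ∫ s in a..x, φ s * ∫ τ in a..s, ψ τ := by
    rw [integral_prod _ (hprod.indicator hT.compl), intervalIntegral.integral_of_le hax]
    refine setIntegral_congr_fun measurableSet_Ioc fun s hs => ?_
    have hset : Iio s ∩ Ioc a x = Ioo a s := by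
      ext τ; simp only [mem_inter_iff, mem_Iio, mem_Ioc, mem_Ioo]
      exact ⟨fun h => ⟨h.2.1, h.1⟩, fun h => ⟨h.2, h.1, (h.2.trans_le hs.2).le⟩⟩
    have hslice : ∀ τ, Tᶜ.indicator (fun z => φ z.1 * ψ z.2) (s, τ)
        = (Iio s).indicator (fun τ => φ s * ψ τ) τ := fun τ => by
      simp [T, indicator_apply, not_le]
    simp only [hslice]
    rw [integral_indicator measurableSet_Iio, Measure.restrict_restrict measurableSet_Iio, hset,
      setIntegral_congr_set Ioo_ae_eq_Ioc, integral_const_mul,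
      intervalIntegral.integral_of_le hs.1.le]
  rw [intervalIntegral.integral_of_le hax, intervalIntegral.integral_of_le hax,
    ← integral_prod_mul, ← integral_add_compl hT hprod, ← integral_indicator hT,
    ← integral_indicator hT.compl, hlower, hupper]

theorem mul_eq_add_integral {F G φ ψ : ℝ → 𝕜} (hax : a ≤ x)
    (hφ : IntervalIntegrable φ volume a x) (hψ : IntervalIntegrable ψ volume a x)
    (hF : ∀ t ∈ Icc a x, F t = F a + ∫ s in a..t, φ s)
    (hG : ∀ t ∈ Icc a x, G t = G a + ∫ s in a..t, ψ s) :
    F x * G x = F a * G a + ∫ s in a..x, (φ s * G s + F s * ψ s) := by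
  rw [← uIcc_of_le hax] at hF hG
  have hΦ := intervalIntegral.continuousOn_primitive_interval' hφ left_mem_uIcc
  have hΨ := intervalIntegral.continuousOn_primitive_interval' hψ left_mem_uIcc
  have hsplit : ∫ s in a..x, (φ s * G s + F s * ψ s)
      = G a * (∫ s in a..x, φ s) + F a * (∫ s in a..x, ψ s)
        + ((∫ s in a..x, φ s * ∫ τ in a..s, ψ τ) + ∫ s in a..x, (∫ τ in a..s, φ τ) * ψ s) := by
    have hpoint : EqOn (fun s => φ s * G s + F s * ψ s) (fun s => (G a * φ s + F a * ψ s)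
        + (φ s * (∫ τ in a..s, ψ τ) + (∫ τ in a..s, φ τ) * ψ s)) (uIcc a x) := fun s hs => by
      simp only [hF s hs, hG s hs]
      ring
    rw [intervalIntegral.integral_congr hpoint,
      intervalIntegral.integral_add ((hφ.const_mul _).add (hψ.const_mul _))
        ((hφ.mul_continuousOn hΨ).add (hψ.continuousOn_mul hΦ)),
      intervalIntegral.integral_add (hφ.const_mul _) (hψ.const_mul _),
      intervalIntegral.integral_add (hφ.mul_continuousOn hΨ) (hψ.continuousOn_mul hΦ),
      intervalIntegral.integral_const_mul, intervalIntegral.integral_const_mul]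
  rw [hF x right_mem_uIcc, hG x right_mem_uIcc, hsplit]
  linear_combination integral_mul_integral_eq_add hax hφ hψ

end ProductRule

theorem IntervalIntegrable.ofReal {f : ℝ → ℝ} {a x : ℝ} (hf : IntervalIntegrable f volume a x) :
    IntervalIntegrable (fun t => (f t : ℂ)) volume a x :=
  ⟨hf.1.ofReal, hf.2.ofReal⟩

theorem IsSolutionFromReal.ofReal {p q r : ℝ → ℝ} {a : ℝ} {S : Set ℝ} {lam : ℝ} {u du : ℝ → ℝ}
    (h : IsSolutionFromReal p q r a S lam u du) :
    IsSolutionFrom p q r a S lam (fun t => u t) (fun t => du t) := by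
  refine ⟨Complex.continuous_ofReal.comp_continuousOn h.1,
    Complex.continuous_ofReal.comp_continuousOn h.2.1, fun y hy => ?_, fun y hy => ?_⟩
  · simp only [h.2.2.1 y hy, Complex.ofReal_add, ← intervalIntegral.integral_ofReal,
      Complex.ofReal_div]
  · simp only [h.2.2.2 y hy, Complex.ofReal_add, ← intervalIntegral.integral_ofReal,
      Complex.ofReal_mul, Complex.ofReal_sub]

theorem eq_add_integral_of_Ioc_subset {E : Type*} [NormedAddCommGroup E] [NormedSpace ℝ E]
    {F φ : ℝ → E} {a x : ℝ} {S : Set ℝ} (hxS : Ioc a x ⊆ S)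
    (h : ∀ t ∈ S, F t = F a + ∫ s in a..t, φ s) :
    ∀ t ∈ Icc a x, F t = F a + ∫ s in a..t, φ s := by
  intro t ht
  rcases ht.1.eq_or_lt with rfl | hat
  · simp
  · exact h t (hxS ⟨hat, ht.2⟩)

theorem IsSolutionFrom.wronskian_eq {p q r : ℝ → ℝ} {a x : ℝ} {S : Set ℝ} {z w : ℂ}
    {F dF G dG : ℝ → ℂ} (hF : IsSolutionFrom p q r a S z F dF)
    (hG : IsSolutionFrom p q r a S w G dG) (hax : a ≤ x) (hxS : Ioc a x ⊆ S)
    (hp : IntervalIntegrable (fun t => 1 / p t) volume a x)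
    (hq : IntervalIntegrable q volume a x) (hr : IntervalIntegrable r volume a x) :
    F x * dG x - dF x * G x
      = F a * dG a - dF a * G a + (z - w) * ∫ t in a..x, (r t : ℂ) * (F t * G t) := by
  have hIcc : uIcc a x ⊆ insert a S := by
    rw [uIcc_of_le hax, ← Ioc_insert_left hax]
    exact insert_subset_insert hxS
  have hFc := hF.1.mono hIcc
  have hdFc := hF.2.1.mono hIcc
  have hGc := hG.1.mono hIcc
  have hdGc := hG.2.1.mono hIcc
  have hquot {D : ℝ → ℂ} (hD : ContinuousOn D (uIcc a x)) :
      IntervalIntegrable (fun t => D t / (p t : ℂ)) volume a x := by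
    simpa only [Complex.ofReal_div, Complex.ofReal_one, mul_one_div] using
      hp.ofReal.continuousOn_mul hD
  have hpot (ζ : ℂ) {H : ℝ → ℂ} (hH : ContinuousOn H (uIcc a x)) :
      IntervalIntegrable (fun t => ((q t : ℂ) - ζ * (r t : ℂ)) * H t) volume a x :=
    (hq.ofReal.sub (hr.ofReal.const_mul ζ)).mul_continuousOn hH
  have hFG := mul_eq_add_integral hax (hquot hdFc) (hpot w hGc)
    (eq_add_integral_of_Ioc_subset hxS hF.2.2.1) (eq_add_integral_of_Ioc_subset hxS hG.2.2.2)
  have hGF := mul_eq_add_integral hax (hpot z hFc) (hquot hdGc)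
    (eq_add_integral_of_Ioc_subset hxS hF.2.2.2) (eq_add_integral_of_Ioc_subset hxS hG.2.2.1)
  have hdiff := (intervalIntegral.integral_sub
    (((hquot hdFc).mul_continuousOn hdGc).add ((hpot w hGc).continuousOn_mul hFc))
    (((hpot z hFc).mul_continuousOn hGc).add ((hquot hdGc).continuousOn_mul hdFc))).symm.trans
    (intervalIntegral.integral_congr (g := fun t => (z - w) * ((r t : ℂ) * (F t * G t)))
      fun t _ => by ring)
  rw [intervalIntegral.integral_const_mul] at hdiff
  linear_combination hFG - hGF + hdiff

theorem IsSolutionFrom.variation_of_constants {p q r : ℝ → ℝ} {a x : ℝ} {S : Set ℝ}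
    {w z m : ℂ} {c dc s ds u du : ℝ → ℂ} (hu : IsSolutionFrom p q r a S z u du)
    (hc : IsSolutionFrom p q r a S w c dc) (hs : IsSolutionFrom p q r a S w s ds)
    (hc0 : c a = 1) (hdc0 : dc a = 0) (hs0 : s a = 0) (hds0 : ds a = 1)
    (hu0 : u a = 1) (hdu0 : du a = m) (hax : a ≤ x) (hxS : Ioc a x ⊆ S)
    (hp : IntervalIntegrable (fun t => 1 / p t) volume a x)
    (hq : IntervalIntegrable q volume a x) (hr : IntervalIntegrable r volume a x) :
    c x + m * s x = u x + (z - w) * (s x * (∫ t in a..x, (r t : ℂ) * (c t * u t))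
      - c x * ∫ t in a..x, (r t : ℂ) * (s t * u t)) := by
  have hcu := hc.wronskian_eq hu hax hxS hp hq hr
  have hsu := hs.wronskian_eq hu hax hxS hp hq hr
  have hcs := hc.wronskian_eq hs hax hxS hp hq hr
  rw [hc0, hdc0, hu0, hdu0] at hcu
  rw [hs0, hds0, hu0, hdu0] at hsu
  rw [hc0, hdc0, hs0, hds0, sub_self, zero_mul] at hcs
  linear_combination u x * hcs + c x * hsu - s x * hcu

section Lp

variable {α E : Type*} [MeasurableSpace α] {μ : Measure α} [NormedAddCommGroup E]

theorem lpNorm_mono_ae_real {f : α → E} {g : α → ℝ} {p : ENNReal} (hg : MemLp g p μ)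
    (h : ∀ᵐ t ∂μ, ‖f t‖ ≤ g t) : lpNorm f p μ ≤ lpNorm g p μ := by
  by_cases hf : AEStronglyMeasurable f μ
  · rw [← toReal_eLpNorm hf, ← toReal_eLpNorm hg.aestronglyMeasurable]
    exact ENNReal.toReal_mono hg.eLpNorm_ne_top (eLpNorm_mono_ae_real h)
  · simp [hf]

theorem integral_norm_mul_norm_le_lpNorm_mul {f g : α → E} (hf : MemLp f 2 μ)
    (hg : MemLp g 2 μ) : ∫ t, ‖f t‖ * ‖g t‖ ∂μ ≤ lpNorm f 2 μ * lpNorm g 2 μ := by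
  have h := integral_mul_norm_le_Lp_mul_Lq Real.HolderConjugate.two_two
    (by simpa using hf) (by simpa using hg)
  rw [lpNorm_eq_integral_norm_rpow_toReal two_ne_zero ENNReal.ofNat_ne_top hf.1,
    lpNorm_eq_integral_norm_rpow_toReal two_ne_zero ENNReal.ofNat_ne_top hg.1]
  simpa using h

end Lp

section WeightedNorm

variable {E : Type*} [NormedAddCommGroup E] {r : ℝ → ℝ} {a x : ℝ}

noncomputable def weightedMeasure (r : ℝ → ℝ) (a x : ℝ) : Measure ℝ :=
  (volume.restrict (Ioc a x)).withDensity fun t => ENNReal.ofReal (r t)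

theorem ae_weightedMeasure_of_forall_mem {P : ℝ → Prop} (h : ∀ t ∈ Ioc a x, P t) :
    ∀ᵐ t ∂weightedMeasure r a x, P t :=
  (withDensity_absolutelyContinuous _ _).ae_le (ae_restrict_of_forall_mem measurableSet_Ioc h)

theorem integral_weightedMeasure (hax : a ≤ x) (hrI : IntervalIntegrable r volume a x)
    (hr0 : ∀ t ∈ Ioc a x, 0 ≤ r t) (g : ℝ → ℝ) :
    ∫ t, g t ∂weightedMeasure r a x = ∫ t in a..x, r t * g t := by
  rw [weightedMeasure, integral_withDensity_eq_integral_toReal_smul₀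
      hrI.1.aemeasurable.ennreal_ofReal (ae_of_all _ fun _ => ENNReal.ofReal_lt_top),
    intervalIntegral.integral_of_le hax]
  refine setIntegral_congr_fun measurableSet_Ioc fun t ht => ?_
  rw [ENNReal.toReal_ofReal (hr0 t ht), smul_eq_mul]

theorem memLp_weightedMeasure {f : ℝ → E} (hrI : IntervalIntegrable r volume a x)
    (hf : ContinuousOn f (Icc a x)) (p : ENNReal) : MemLp f p (weightedMeasure r a x) := by
  have : IsFiniteMeasure (weightedMeasure r a x) :=
    isFiniteMeasure_withDensity_ofReal hrI.1.hasFiniteIntegral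
  obtain ⟨C, hC⟩ := isCompact_Icc.exists_bound_of_continuousOn hf
  exact MemLp.of_bound (((hf.mono Ioc_subset_Icc_self).aestronglyMeasurable
      measurableSet_Ioc).mono_ac (withDensity_absolutelyContinuous _ _)) C
    (ae_weightedMeasure_of_forall_mem fun t ht => hC t (Ioc_subset_Icc_self ht))

theorem slNorm_eq_lpNorm {f : ℝ → E} (hax : a ≤ x) (hrI : IntervalIntegrable r volume a x)
    (hr0 : ∀ t ∈ Ioc a x, 0 ≤ r t) (hf : ContinuousOn f (Icc a x)) :
    slNorm r a x f = lpNorm f 2 (weightedMeasure r a x) := by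
  rw [lpNorm_eq_integral_norm_rpow_toReal two_ne_zero ENNReal.ofNat_ne_top
    (memLp_weightedMeasure hrI hf 2).1, integral_weightedMeasure hax hrI hr0, slNorm,
    Real.sqrt_eq_rpow]
  simp [mul_comm]

theorem norm_integral_mul_le_slNorm_mul {f g : ℝ → ℂ} {y : ℝ}
    (hy : y ∈ Icc a x) (hrI : IntervalIntegrable r volume a x) (hr0 : ∀ t ∈ Ioc a x, 0 ≤ r t)
    (hf : ContinuousOn f (Icc a x)) (hg : ContinuousOn g (Icc a x)) :
    ‖∫ t in a..y, (r t : ℂ) * (f t * g t)‖ ≤ slNorm r a x f * slNorm r a x g := by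
  have hax : a ≤ x := hy.1.trans hy.2
  have hint : IntervalIntegrable (fun t => ‖(r t : ℂ) * (f t * g t)‖) volume a x :=
    (hrI.ofReal.mul_continuousOn (by rw [uIcc_of_le hax]; exact hf.mul hg)).norm
  calc ‖∫ t in a..y, (r t : ℂ) * (f t * g t)‖
      ≤ ∫ t in a..y, ‖(r t : ℂ) * (f t * g t)‖ :=
        intervalIntegral.norm_integral_le_integral_norm hy.1
    _ ≤ ∫ t in a..x, ‖(r t : ℂ) * (f t * g t)‖ :=
        intervalIntegral.integral_mono_interval le_rfl hy.1 hy.2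
          (ae_of_all _ fun _ => norm_nonneg _) hint
    _ = ∫ t in a..x, r t * (‖f t‖ * ‖g t‖) := by
        refine intervalIntegral.integral_congr_ae (ae_of_all _ fun t ht => ?_)
        rw [uIoc_of_le hax] at ht
        rw [norm_mul, norm_mul, Complex.norm_real, Real.norm_eq_abs, abs_of_nonneg (hr0 t ht)]
    _ = ∫ t, ‖f t‖ * ‖g t‖ ∂weightedMeasure r a x :=
        (integral_weightedMeasure hax hrI hr0 _).symm
    _ ≤ slNorm r a x f * slNorm r a x g := by
        rw [slNorm_eq_lpNorm hax hrI hr0 hf, slNorm_eq_lpNorm hax hrI hr0 hg]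
        exact integral_norm_mul_norm_le_lpNorm_mul (memLp_weightedMeasure hrI hf 2)
          (memLp_weightedMeasure hrI hg 2)

theorem slNorm_le_of_norm_le {E₁ E₂ E₃ : Type*} [NormedAddCommGroup E₁] [NormedAddCommGroup E₂]
    [NormedAddCommGroup E₃] {v : ℝ → E} {u : ℝ → E₁} {f : ℝ → E₂} {g : ℝ → E₃} {k₁ k₂ : ℝ}
    (hax : a ≤ x) (hrI : IntervalIntegrable r volume a x) (hr0 : ∀ t ∈ Ioc a x, 0 ≤ r t)
    (hv : ContinuousOn v (Icc a x)) (hu : ContinuousOn u (Icc a x))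
    (hf : ContinuousOn f (Icc a x)) (hg : ContinuousOn g (Icc a x)) (hk₁ : 0 ≤ k₁) (hk₂ : 0 ≤ k₂)
    (h : ∀ t ∈ Ioc a x, ‖v t‖ ≤ ‖u t‖ + k₁ * ‖f t‖ + k₂ * ‖g t‖) :
    slNorm r a x v ≤ slNorm r a x u + k₁ * slNorm r a x f + k₂ * slNorm r a x g := by
  have hu2 := (memLp_weightedMeasure hrI hu 2).norm
  have hf2 := (memLp_weightedMeasure hrI hf 2).norm.const_smul k₁
  have hg2 := (memLp_weightedMeasure hrI hg 2).norm.const_smul k₂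
  rw [slNorm_eq_lpNorm hax hrI hr0 hv, slNorm_eq_lpNorm hax hrI hr0 hu,
    slNorm_eq_lpNorm hax hrI hr0 hf, slNorm_eq_lpNorm hax hrI hr0 hg]
  calc lpNorm v 2 (weightedMeasure r a x)
      ≤ lpNorm ((fun t => ‖u t‖) + k₁ • (fun t => ‖f t‖) + k₂ • (fun t => ‖g t‖)) 2
          (weightedMeasure r a x) :=
        lpNorm_mono_ae_real ((hu2.add hf2).add hg2) (ae_weightedMeasure_of_forall_mem h)
    _ ≤ lpNorm (fun t => ‖u t‖) 2 (weightedMeasure r a x)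
          + lpNorm (k₁ • fun t => ‖f t‖) 2 (weightedMeasure r a x)
          + lpNorm (k₂ • fun t => ‖g t‖) 2 (weightedMeasure r a x) :=
        (lpNorm_add_le (hu2.add hf2) one_le_two).trans
          (add_le_add_left (lpNorm_add_le hu2 one_le_two) _)
    _ = _ := by
        rw [lpNorm_const_smul, lpNorm_const_smul,
          lpNorm_norm (memLp_weightedMeasure hrI hu 2).1,
          lpNorm_norm (memLp_weightedMeasure hrI hf 2).1,
          lpNorm_norm (memLp_weightedMeasure hrI hg 2).1]
        simp [abs_of_nonneg hk₁, abs_of_nonneg hk₂]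

end WeightedNorm

theorem slNorm_ofReal (r : ℝ → ℝ) (a x : ℝ) (f : ℝ → ℝ) :
    slNorm r a x (fun t => (f t : ℂ)) = slNorm r a x f := by
  simp only [slNorm, Complex.norm_real]

theorem IsSolutionFrom.slNorm_add_mul_le {p q r : ℝ → ℝ} {a x : ℝ} {S : Set ℝ}
    {w z m : ℂ} {c dc s ds u du : ℝ → ℂ} (hu : IsSolutionFrom p q r a S z u du)
    (hc : IsSolutionFrom p q r a S w c dc) (hs : IsSolutionFrom p q r a S w s ds)
    (hc0 : c a = 1) (hdc0 : dc a = 0) (hs0 : s a = 0) (hds0 : ds a = 1)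
    (hu0 : u a = 1) (hdu0 : du a = m) (hax : a ≤ x) (hxS : Ioc a x ⊆ S)
    (hp : IntervalIntegrable (fun t => 1 / p t) volume a x)
    (hq : IntervalIntegrable q volume a x) (hr : IntervalIntegrable r volume a x)
    (hr0 : ∀ t ∈ Ioc a x, 0 ≤ r t) :
    slNorm r a x (fun t => c t + m * s t) ≤
      (1 + 2 * ‖z - w‖ * slNorm r a x s * slNorm r a x c) * slNorm r a x u := by
  have hIcc : Icc a x ⊆ insert a S := by
    rw [← Ioc_insert_left hax]
    exact insert_subset_insert hxS
  have hsub {t : ℝ} (ht : t ∈ Ioc a x) : uIcc a t ⊆ uIcc a x := by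
    rw [uIcc_of_le ht.1.le, uIcc_of_le hax]
    exact Icc_subset_Icc_right ht.2
  have hk (f g : ℝ → ℂ) : 0 ≤ ‖z - w‖ * (slNorm r a x f * slNorm r a x g) :=
    mul_nonneg (norm_nonneg _) (mul_nonneg (Real.sqrt_nonneg _) (Real.sqrt_nonneg _))
  refine (slNorm_le_of_norm_le (v := fun t => c t + m * s t) hax hr hr0
    ((hc.1.mono hIcc).add (continuousOn_const.mul (hs.1.mono hIcc))) (hu.1.mono hIcc)
    (hc.1.mono hIcc) (hs.1.mono hIcc) (hk s u) (hk c u) fun t ht => ?_).trans_eq (by ring)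
  have hcu := norm_integral_mul_le_slNorm_mul ⟨ht.1.le, ht.2⟩ hr hr0
    (hc.1.mono hIcc) (hu.1.mono hIcc)
  have hsu := norm_integral_mul_le_slNorm_mul ⟨ht.1.le, ht.2⟩ hr hr0
    (hs.1.mono hIcc) (hu.1.mono hIcc)
  rw [hu.variation_of_constants hc hs hc0 hdc0 hs0 hds0 hu0 hdu0 ht.1.le
    ((Ioc_subset_Ioc_right ht.2).trans hxS) (hp.mono_set (hsub ht)) (hq.mono_set (hsub ht))
    (hr.mono_set (hsub ht))]
  calc _ ≤ ‖u t‖ + ‖z - w‖ * (‖s t‖ * ‖∫ τ in a..t, (r τ : ℂ) * (c τ * u τ)‖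
          + ‖c t‖ * ‖∫ τ in a..t, (r τ : ℂ) * (s τ * u τ)‖) := by
        refine (norm_add_le _ _).trans (add_le_add_right ?_ _)
        rw [norm_mul]
        refine mul_le_mul_of_nonneg_left ((norm_sub_le _ _).trans_eq ?_) (norm_nonneg _)
        rw [norm_mul, norm_mul]
    _ ≤ ‖u t‖ + ‖z - w‖ * (‖s t‖ * (slNorm r a x c * slNorm r a x u)
          + ‖c t‖ * (slNorm r a x s * slNorm r a x u)) := by gcongr
    _ = _ := by ring

theorem norm_bound_c_plus_ms_general
    (a : ℝ) (b : EReal)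
    (p q r : ℝ → ℝ) (S : Set ℝ) (hS : S = {x : ℝ | a < x ∧ (x : EReal) < b})
    -- basic assumptions on the coefficients
    (hr : ∀ x ∈ S, 0 < r x)
    -- `a` is a regular endpoint
    (hreg : ∀ x ∈ S, IntegrableOn (fun t => 1 / p t) (Ioo a x) ∧
      IntegrableOn q (Ioo a x) ∧ IntegrableOn r (Ioo a x))
    (lam : ℝ) (x : ℝ) (hx : x ∈ S) (ε : ℝ) (hε : 0 < ε)
    -- `c` and `s`: the real solutions of `τ u = λ u` with the stated initial conditions
    (c dc s ds : ℝ → ℝ)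
    (hc : IsSolutionFromReal p q r a S lam c dc)
    (hs : IsSolutionFromReal p q r a S lam s ds)
    (hc0 : c a = 1) (hdc0 : dc a = 0) (hs0 : s a = 0) (hds0 : ds a = 1)
    -- `u`: a solution of `τ u = (λ + iε) u` with `u(a)=1`, `(p u')(a) = m`
    (m : ℂ) (u du : ℝ → ℂ)
    (hu : IsSolutionFrom p q r a S ((lam : ℂ) + Complex.I * (ε : ℂ)) u du)
    (hu0 : u a = 1) (hdu0 : du a = m) :
    slNorm r a x (fun t => (c t : ℂ) + m * (s t : ℂ)) ≤
      (1 + 2 * ε * slNorm r a x s * slNorm r a x c) * slNorm r a x u := by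
  subst hS
  have hxS : Ioc a x ⊆ {y : ℝ | a < y ∧ (y : EReal) < b} := fun t ht =>
    ⟨ht.1, (EReal.coe_le_coe_iff.2 ht.2).trans_lt hx.2⟩
  obtain ⟨hp, hq, hrI⟩ := hreg x hx
  have hbound := hu.slNorm_add_mul_le hc.ofReal hs.ofReal (by simp [hc0]) (by simp [hdc0])
    (by simp [hs0]) (by simp [hds0]) hu0 hdu0 hx.1.le hxS
    ((intervalIntegrable_iff_integrableOn_Ioo_of_le hx.1.le).2 hp)
    ((intervalIntegrable_iff_integrableOn_Ioo_of_le hx.1.le).2 hq)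
    ((intervalIntegrable_iff_integrableOn_Ioo_of_le hx.1.le).2 hrI)
    fun t ht => (hr t (hxS ht)).le
  simpa [slNorm_ofReal, abs_of_pos hε] using hbound

theorem norm_bound_c_plus_ms
    (a : ℝ) (b : EReal) (hab : (a : EReal) < b)
    (p q r : ℝ → ℝ) (S : Set ℝ) (hS : S = {x : ℝ | a < x ∧ (x : EReal) < b})
    -- basic assumptions on the coefficients
    (hpm : Measurable p) (hqm : Measurable q) (hrm : Measurable r)
    (hp : ∀ x ∈ S, 0 < p x) (hr : ∀ x ∈ S, 0 < r x)
    (hploc : LocallyIntegrableOn (fun t => 1 / p t) S)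
    (hqloc : LocallyIntegrableOn q S) (hrloc : LocallyIntegrableOn r S)
    -- `a` is a regular endpoint
    (hreg : ∀ x ∈ S, IntegrableOn (fun t => 1 / p t) (Ioo a x) ∧
      IntegrableOn q (Ioo a x) ∧ IntegrableOn r (Ioo a x))
    (lam : ℝ) (x : ℝ) (hx : x ∈ S) (ε : ℝ) (hε : 0 < ε)
    -- `c` and `s`: the real solutions of `τ u = λ u` with the stated initial conditions
    (c dc s ds : ℝ → ℝ)
    (hc : IsSolutionFromReal p q r a S lam c dc)
    (hs : IsSolutionFromReal p q r a S lam s ds)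
    (hc0 : c a = 1) (hdc0 : dc a = 0) (hs0 : s a = 0) (hds0 : ds a = 1)
    -- `u`: a solution of `τ u = (λ + iε) u` with `u(a)=1`, `(p u')(a) = m`
    (m : ℂ) (u du : ℝ → ℂ)
    (hu : IsSolutionFrom p q r a S ((lam : ℂ) + Complex.I * (ε : ℂ)) u du)
    (hu0 : u a = 1) (hdu0 : du a = m) :
    slNorm r a x (fun t => (c t : ℂ) + m * (s t : ℂ)) ≤
      (1 + 2 * ε * slNorm r a x s * slNorm r a x c) * slNorm r a x u :=
  norm_bound_c_plus_ms_general a b p q r S hS hr hreg lam x hx ε hε c dc s ds hc hs hc0 hdc0 hs0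
    hds0 m u du hu hu0 hdu0
end

section
/- Let (a,b) = (a,∞) with a > −∞ and assume (H2) and (H3). Fix λ ∈ ℝ and let u be a real-valued solution of τu = λu on (a,∞) such that √(r(x)) |u(x)| + |p(x)u'(x)| / √(r(x)) ≥ C₁ > 0 for all x ∈ (a,∞). Then for every α with 0 < α < I₋ / (I₋ + √γ) and every x with [x−1, x+1] ⊂ (a,∞), there exists x₀ ∈ [x−1, x+1] such that √(r(x₀)) |u(x₀)| ≥ α C₁. -/
/-!
If `√r |u| < α C₁` on a window `[x-1, x+1]`, the lower bound forces `|p u'| > (1-α) C₁ √r` there,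
so `p u'` cannot vanish and keeps one sign.  Then `u` is monotone across the window, and its
increment `∫ |p u'| / p ≥ (1-α) C₁ / √r₊ · ∫ r / p ≥ 2 (1-α) C₁ I₋ / √r₊` is larger than the
`2 α C₁ / √r₋` that the smallness of `u` at the two endpoints allows, because
`√(r₊ / r₋) ≤ √γ` and `α √γ < (1-α) I₋`.
-/

open MeasureTheory Set Filter

open scoped ENNReal

/-- `u` (with quasi-derivative `du = p u'`) is a real solution of `τ u = λ u` on the
open set `S`, expressed in integrated form between any two points of `S`. -/
def IsSolutionOnReal (p q r : ℝ → ℝ) (S : Set ℝ) (lam : ℝ) (u du : ℝ → ℝ) : Prop :=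
  ContinuousOn u S ∧ ContinuousOn du S ∧
  ∀ x ∈ S, ∀ y ∈ S,
    (u y = u x + ∫ t in x..y, du t / p t) ∧
    (du y = du x + ∫ t in x..y, (q t - lam * r t) * u t)

/-- `r₋(x) = inf_{[x-1,x+1]} r`. -/
noncomputable def rMinus (r : ℝ → ℝ) (x : ℝ) : ℝ := sInf (r '' Set.Icc (x - 1) (x + 1))

/-- `r₊(x) = sup_{[x-1,x+1]} r`. -/
noncomputable def rPlus (r : ℝ → ℝ) (x : ℝ) : ℝ := sSup (r '' Set.Icc (x - 1) (x + 1))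

/-- `I₋ = inf_x ∫_x^{x+1} r(t)/p(t) dt`, the infimum over `x` with `(x,x+1] ⊂ (a,∞)`,
computed as a lower Lebesgue integral (so possibly infinite values are handled). -/
noncomputable def IminusE (p r : ℝ → ℝ) (a : ℝ) : ℝ≥0∞ :=
  ⨅ x ∈ Set.Ioi a, ∫⁻ t in Set.Ioc x (x + 1), ENNReal.ofReal (r t / p t)

/-- `γ = sup_x r₊(x)/r₋(x)`, the supremum over `x` with `[x-1,x+1] ⊂ (a,∞)`. -/
noncomputable def slGamma (r : ℝ → ℝ) (a : ℝ) : ℝ :=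
  sSup ((fun x => rPlus r x / rMinus r x) '' Set.Ioi (a + 1))

theorem sub_mul_mul_lt_of_le_add_div {α C A B ρ : ℝ} (hρ : 0 < ρ) (h : C ≤ A + B / ρ)
    (hA : A < α * C) : (1 - α) * C * ρ < B := by
  rw [← lt_div_iff₀ hρ]
  linarith

theorem mul_le_mul_of_mul_sqrt_lt {c R K B : ℝ} (hR : 0 ≤ R) (hRK : √R ≤ K) (hB : 0 ≤ B)
    (h : c * √R < B) : c * R ≤ K * B :=
  calc c * R = c * √R * √R := by rw [mul_assoc, Real.mul_self_sqrt hR]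
    _ ≤ B * √R := mul_le_mul_of_nonneg_right h.le (Real.sqrt_nonneg R)
    _ ≤ B * K := mul_le_mul_of_nonneg_left hRK hB
    _ = K * B := mul_comm _ _

theorem ofReal_mul_le_ofReal_of_mul_two_mul_le {b C d : ℝ} {I : ℝ≥0∞} (hC : 0 < C) (hb : 0 ≤ b)
    (h : ENNReal.ofReal (b * C) * (2 * I) ≤ ENNReal.ofReal (2 * C * d)) :
    ENNReal.ofReal b * I ≤ ENNReal.ofReal d := by
  have h2C : ENNReal.ofReal (2 * C) ≠ 0 := by simpa using hC
  rw [← ENNReal.mul_le_mul_iff_right h2C ENNReal.ofReal_ne_top,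
    ← ENNReal.ofReal_mul (by positivity)]
  convert h using 1
  rw [ENNReal.ofReal_mul hb, ENNReal.ofReal_mul zero_le_two, ENNReal.ofReal_ofNat]
  ring

section Increment

variable {s t : ℝ} {f g p r : ℝ → ℝ}

theorem abs_intervalIntegral_div_eq_of_ne_zero (hst : s ≤ t) (hg : ContinuousOn g (Icc s t))
    (hg0 : ∀ y ∈ Icc s t, g y ≠ 0) (hp : ∀ y ∈ Icc s t, 0 ≤ p y) :
    |∫ y in s..t, g y / p y| = ∫ y in s..t, |g y| / p y := by
  have hnonneg : 0 ≤ ∫ y in s..t, |g y| / p y :=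
    intervalIntegral.integral_nonneg hst fun y hy => div_nonneg (abs_nonneg _) (hp y hy)
  have hW : ∀ {y}, y ∈ uIcc s t → y ∈ Icc s t := fun hy => uIcc_of_le hst ▸ hy
  rcases isPreconnected_Icc.eq_or_eq_neg_of_sq_eq hg.abs hg (fun y _ => sq_abs (g y))
    (fun hy => hg0 _ hy) with hg_pos | hg_neg
  · rw [intervalIntegral.integral_congr (g := fun y => |g y| / p y) fun y hy => by
        simp only [hg_pos (hW hy)],
      abs_of_nonneg hnonneg]
  · rw [intervalIntegral.integral_congr (g := fun y => -(|g y| / p y)) fun y hy => by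
        simp only [hg_neg (hW hy), Pi.neg_apply, neg_div, neg_neg],
      intervalIntegral.integral_neg, abs_neg, abs_of_nonneg hnonneg]

theorem ofReal_mul_lintegral_le_of_increment (hst : s ≤ t) (hg : ContinuousOn g (Icc s t))
    (hg0 : ∀ y ∈ Icc s t, g y ≠ 0) (hp : ∀ y ∈ Icc s t, 0 < p y)
    (hpint : IntegrableOn (fun y => 1 / p y) (Icc s t)) {c K : ℝ} (hc : 0 ≤ c) (hK : 0 ≤ K)
    (hcr : ∀ y ∈ Icc s t, c * r y ≤ K * |g y|) (hf : f t = f s + ∫ y in s..t, g y / p y) :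
    ENNReal.ofReal c * ∫⁻ y in Ioc s t, ENNReal.ofReal (r y / p y) ≤
      ENNReal.ofReal (K * |f t - f s|) := by
  have hint : IntegrableOn (fun y => K * (|g y| / p y)) (Ioc s t) := by
    have h := (IntegrableOn.continuousOn_mul_of_subset hg.abs
      (hpint.mono_set Ioc_subset_Icc_self) isCompact_Icc measurableSet_Ioc
      Ioc_subset_Icc_self).const_mul K
    simp only [mul_one_div] at h
    exact h
  have hnonneg : 0 ≤ᵐ[volume.restrict (Ioc s t)] fun y => K * (|g y| / p y) :=
    ae_restrict_of_forall_mem measurableSet_Ioc fun y hy =>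
      mul_nonneg hK (div_nonneg (abs_nonneg _) (hp y (Ioc_subset_Icc_self hy)).le)
  calc ENNReal.ofReal c * ∫⁻ y in Ioc s t, ENNReal.ofReal (r y / p y)
      = ∫⁻ y in Ioc s t, ENNReal.ofReal (c * (r y / p y)) := by
        simp only [ENNReal.ofReal_mul hc, lintegral_const_mul' _ _ ENNReal.ofReal_ne_top]
    _ ≤ ∫⁻ y in Ioc s t, ENNReal.ofReal (K * (|g y| / p y)) := by
        refine lintegral_mono_ae (ae_restrict_of_forall_mem measurableSet_Ioc fun y hy =>
          ENNReal.ofReal_le_ofReal ?_)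
        rw [← mul_div_assoc, ← mul_div_assoc]
        exact div_le_div_of_nonneg_right (hcr y (Ioc_subset_Icc_self hy))
          (hp y (Ioc_subset_Icc_self hy)).le
    _ = ENNReal.ofReal (K * |f t - f s|) := by
        rw [← ofReal_integral_eq_lintegral_ofReal hint hnonneg, integral_const_mul,
          ← intervalIntegral.integral_of_le hst,
          ← abs_intervalIntegral_div_eq_of_ne_zero hst hg hg0 fun y hy => (hp y hy).le, hf,
          add_sub_cancel_left]

end Increment

section Window

variable {a x y : ℝ} {p r u : ℝ → ℝ}

theorem rMinus_le_of_mem (hr : ∀ y ∈ Icc (x - 1) (x + 1), 0 ≤ r y)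
    (hy : y ∈ Icc (x - 1) (x + 1)) : rMinus r x ≤ r y :=
  csInf_le ⟨0, forall_mem_image.2 hr⟩ (mem_image_of_mem r hy)

theorem le_rPlus_of_mem (hbdd : BddAbove (r '' Icc (x - 1) (x + 1)))
    (hy : y ∈ Icc (x - 1) (x + 1)) : r y ≤ rPlus r x :=
  le_csSup hbdd (mem_image_of_mem r hy)

theorem sqrt_rPlus_le (hx : a + 1 < x) (hm : 0 < rMinus r x)
    (hγ : BddAbove ((fun x => rPlus r x / rMinus r x) '' Ioi (a + 1))) :
    √(rPlus r x) ≤ √(slGamma r a) * √(rMinus r x) := by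
  rw [← Real.sqrt_mul' _ hm.le]
  refine Real.sqrt_le_sqrt ?_
  rw [← div_le_iff₀ hm]
  exact le_csSup hγ ⟨x, hx, rfl⟩

theorem IminusE_le_lintegral (hy : a < y) :
    IminusE p r a ≤ ∫⁻ t in Ioc y (y + 1), ENNReal.ofReal (r t / p t) :=
  iInf₂_le (f := fun y (_ : y ∈ Ioi a) => ∫⁻ t in Ioc y (y + 1), ENNReal.ofReal (r t / p t)) y hy

theorem two_mul_IminusE_le_lintegral (hx : a < x - 1) :
    2 * IminusE p r a ≤ ∫⁻ t in Ioc (x - 1) (x + 1), ENNReal.ofReal (r t / p t) := by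
  have hleft := IminusE_le_lintegral (p := p) (r := r) hx
  have hright := IminusE_le_lintegral (p := p) (r := r) (show a < x by linarith)
  rw [sub_add_cancel] at hleft
  rw [← Ioc_union_Ioc_eq_Ioc (by linarith) (by linarith),
    lintegral_union measurableSet_Ioc (Ioc_disjoint_Ioc_of_le le_rfl), two_mul]
  exact add_le_add hleft hright

theorem sqrt_rMinus_mul_abs_sub_lt (hr : ∀ y ∈ Icc (x - 1) (x + 1), 0 ≤ r y) {β : ℝ}
    (hsmall : ∀ y ∈ Icc (x - 1) (x + 1), √(r y) * |u y| < β) :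
    √(rMinus r x) * |u (x + 1) - u (x - 1)| < 2 * β := by
  have hend : ∀ y ∈ Icc (x - 1) (x + 1), √(rMinus r x) * |u y| < β := fun y hy =>
    (mul_le_mul_of_nonneg_right (Real.sqrt_le_sqrt (rMinus_le_of_mem hr hy))
      (abs_nonneg _)).trans_lt (hsmall y hy)
  have hup := hend (x + 1) ⟨by linarith, le_rfl⟩
  have hdown := hend (x - 1) ⟨le_rfl, by linarith⟩
  calc √(rMinus r x) * |u (x + 1) - u (x - 1)|
      ≤ √(rMinus r x) * |u (x + 1)| + √(rMinus r x) * |u (x - 1)| := by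
        rw [← mul_add]
        exact mul_le_mul_of_nonneg_left (abs_sub _ _) (Real.sqrt_nonneg _)
    _ < 2 * β := by linarith

theorem IsSolutionOnReal.ofReal_mul_lintegral_le {q : ℝ → ℝ} {lam c : ℝ} {du : ℝ → ℝ}
    (hu : IsSolutionOnReal p q r (Ioi a) lam u du) (hp : ∀ y ∈ Ioi a, 0 < p y)
    (hr : ∀ y ∈ Ioi a, 0 ≤ r y) (hploc : LocallyIntegrableOn (fun t => 1 / p t) (Ioi a))
    (hbdd : BddAbove (r '' Icc (x - 1) (x + 1))) (hx : a < x - 1) (hc : 0 ≤ c)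
    (hlarge : ∀ y ∈ Icc (x - 1) (x + 1), c * √(r y) < |du y|) :
    ENNReal.ofReal c * ∫⁻ t in Ioc (x - 1) (x + 1), ENNReal.ofReal (r t / p t) ≤
      ENNReal.ofReal (√(rPlus r x) * |u (x + 1) - u (x - 1)|) := by
  have hW : Icc (x - 1) (x + 1) ⊆ Ioi a := fun y hy => hx.trans_le hy.1
  exact ofReal_mul_lintegral_le_of_increment (by linarith) (hu.2.1.mono hW)
    (fun y hy => abs_pos.1 ((mul_nonneg hc (Real.sqrt_nonneg _)).trans_lt (hlarge y hy)))
    (fun y hy => hp y (hW hy)) (hploc.integrableOn_compact_subset hW isCompact_Icc) hc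
    (Real.sqrt_nonneg (rPlus r x))
    (fun y hy => mul_le_mul_of_mul_sqrt_lt (hr y (hW hy))
      (Real.sqrt_le_sqrt (le_rPlus_of_mem hbdd hy)) (abs_nonneg _) (hlarge y hy))
    (hu.2.2 (x - 1) (hW ⟨le_rfl, by linarith⟩) (x + 1) (hW ⟨by linarith, le_rfl⟩)).1

end Window

theorem solution_not_small_on_windows_general
    (a : ℝ) (p q r : ℝ → ℝ)
    -- basic assumptions on the coefficients, on (a,∞)
    (hp : ∀ x ∈ Set.Ioi a, 0 < p x) (hr : ∀ x ∈ Set.Ioi a, 0 < r x)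
    (hploc : LocallyIntegrableOn (fun t => 1 / p t) (Set.Ioi a))
    -- (H3): `γ < ∞`, i.e. the set of ratios is bounded above, with `0 < r₋ ≤ r₊ < ∞`
    (hwin : ∀ x : ℝ, a + 1 < x → 0 < rMinus r x ∧ BddAbove (r '' Set.Icc (x - 1) (x + 1)))
    (hgambdd : BddAbove ((fun x => rPlus r x / rMinus r x) '' Set.Ioi (a + 1)))
    (lam : ℝ)
    -- `u`: a real solution of `τ u = λ u` with the pointwise lower bound `C₁`
    (u du : ℝ → ℝ) (hu : IsSolutionOnReal p q r (Set.Ioi a) lam u du)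
    (C₁ : ℝ) (hC₁ : 0 < C₁)
    (hlb : ∀ x ∈ Set.Ioi a, C₁ ≤ Real.sqrt (r x) * |u x| + |du x| / Real.sqrt (r x)) :
    -- conclusion: for every `0 < α < I₋/(I₋ + √γ)` (the inequality `α < I₋/(I₋+√γ)`
    -- being expressed as `α·√γ < (1-α)·I₋` to accommodate `I₋ = ∞`) and every window
    ∀ α : ℝ, 0 < α →
      ENNReal.ofReal (α * Real.sqrt (slGamma r a)) <
        ENNReal.ofReal (1 - α) * IminusE p r a →
      ∀ x : ℝ, a + 1 < x →
        ∃ x₀ ∈ Set.Icc (x - 1) (x + 1), α * C₁ ≤ Real.sqrt (r x₀) * |u x₀| := by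
  intro α hα hαlt x hx
  by_contra! hsmall
  have hα1 : α < 1 := by
    by_contra! h
    simp [ENNReal.ofReal_eq_zero.2 (sub_nonpos.2 h)] at hαlt
  have hW : Icc (x - 1) (x + 1) ⊆ Ioi a := fun y hy => show a < y by linarith [hy.1]
  obtain ⟨hm, hbdd⟩ := hwin x hx
  have hlarge : ∀ y ∈ Icc (x - 1) (x + 1), (1 - α) * C₁ * √(r y) < |du y| := fun y hy =>
    sub_mul_mul_lt_of_le_add_div (Real.sqrt_pos.2 (hr y (hW hy))) (hlb y (hW hy)) (hsmall y hy)
  have hincr := hu.ofReal_mul_lintegral_le hp (fun y hy => (hr y hy).le) hploc hbdd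
    (by linarith) (mul_nonneg (sub_nonneg.2 hα1.le) hC₁.le) hlarge
  have hends := sqrt_rMinus_mul_abs_sub_lt (fun y hy => (hr y (hW hy)).le) hsmall
  have hreal : √(rPlus r x) * |u (x + 1) - u (x - 1)| ≤ 2 * C₁ * (α * √(slGamma r a)) := by
    linarith [mul_le_mul_of_nonneg_right (sqrt_rPlus_le hx hm hgambdd)
      (abs_nonneg (u (x + 1) - u (x - 1))),
      mul_le_mul_of_nonneg_left hends.le (Real.sqrt_nonneg (slGamma r a))]
  refine (hαlt.trans_le
    (ofReal_mul_le_ofReal_of_mul_two_mul_le hC₁ (sub_nonneg.2 hα1.le) ?_)).false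
  calc ENNReal.ofReal ((1 - α) * C₁) * (2 * IminusE p r a)
      ≤ ENNReal.ofReal ((1 - α) * C₁) *
          ∫⁻ t in Ioc (x - 1) (x + 1), ENNReal.ofReal (r t / p t) := by
        gcongr
        exact two_mul_IminusE_le_lintegral (by linarith)
    _ ≤ _ := hincr.trans (ENNReal.ofReal_le_ofReal hreal)

theorem solution_not_small_on_windows
    (a : ℝ) (p q r : ℝ → ℝ)
    -- basic assumptions on the coefficients, on (a,∞)
    (hpm : Measurable p) (hqm : Measurable q) (hrm : Measurable r)
    (hp : ∀ x ∈ Set.Ioi a, 0 < p x) (hr : ∀ x ∈ Set.Ioi a, 0 < r x)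
    (hploc : LocallyIntegrableOn (fun t => 1 / p t) (Set.Ioi a))
    (hqloc : LocallyIntegrableOn q (Set.Ioi a))
    (hrloc : LocallyIntegrableOn r (Set.Ioi a))
    -- (H2): `I₋ > 0`
    (hI : 0 < IminusE p r a)
    -- (H3): `γ < ∞`, i.e. the set of ratios is bounded above, with `0 < r₋ ≤ r₊ < ∞`
    (hwin : ∀ x : ℝ, a + 1 < x → 0 < rMinus r x ∧ BddAbove (r '' Set.Icc (x - 1) (x + 1)))
    (hgambdd : BddAbove ((fun x => rPlus r x / rMinus r x) '' Set.Ioi (a + 1)))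
    (lam : ℝ)
    -- `u`: a real solution of `τ u = λ u` with the pointwise lower bound `C₁`
    (u du : ℝ → ℝ) (hu : IsSolutionOnReal p q r (Set.Ioi a) lam u du)
    (C₁ : ℝ) (hC₁ : 0 < C₁)
    (hlb : ∀ x ∈ Set.Ioi a, C₁ ≤ Real.sqrt (r x) * |u x| + |du x| / Real.sqrt (r x)) :
    -- conclusion: for every `0 < α < I₋/(I₋ + √γ)` (the inequality `α < I₋/(I₋+√γ)`
    -- being expressed as `α·√γ < (1-α)·I₋` to accommodate `I₋ = ∞`) and every window
    ∀ α : ℝ, 0 < α →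
      ENNReal.ofReal (α * Real.sqrt (slGamma r a)) <
        ENNReal.ofReal (1 - α) * IminusE p r a →
      ∀ x : ℝ, a + 1 < x →
        ∃ x₀ ∈ Set.Icc (x - 1) (x + 1), α * C₁ ≤ Real.sqrt (r x₀) * |u x₀| :=
  solution_not_small_on_windows_general a p q r hp hr hploc hwin hgambdd lam u du hu C₁ hC₁ hlb
end

section
/- Let (a,b) = (0,∞) and suppose there is c > 0 such that 1 − 1/p and 1 − r belong to L¹((c,∞)), and q = q₁ + q₂ where q₁ ∈ L¹((c,∞)), q₂ is locally absolutely continuous with q₂' ∈ L¹((c,∞)), and q₂(t) → 0 as t → ∞. Fix λ > 0, 0 < ε < λ, and t₀ ≥ c with |q₂(t)| ≤ ε for all t ≥ t₀. Let u be a nonzero real-valued solution of τu = λu and define h(t) = (λ − q₂(t)) u(t)² + (p(t)u'(t))². Then h is locally absolutely continuous and strictly positive on [t₀,∞), and for almost every t ≥ t₀ one has |h'(t)| ≤ g(t) h(t), where g(t) = |q₂'(t)|/(λ−ε) + |q₁(t)|/√(λ−ε) + ( (λ+ε) |1 − 1/p(t)| + λ |1 − r(t)| )/√(λ−ε) belongs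 to L¹((t₀,∞)). Consequently, h(t) converges to a finite positive limit as t → ∞. -/
/-!
Along a solution, the energy `h = (λ - q₂) u² + (p u')²` is absolutely continuous with
`h' = -q₂' u² + 2 u (p u') (q₁ + (λ - q₂) (1/p - 1) + λ (1 - r))`; since `λ - q₂ ≥ λ - ε`, one has
`u² ≤ h / (λ - ε)` and `2 |u| |p u'| ≤ h / √(λ - ε)`, whence `|h'| ≤ g h`.

A crude Gronwall estimate does the rest: on an interval where `∫ g ≤ 1/4`, a function with
`|f'| ≤ g |f|` stays within `|f c| / 3` of its value at any point `c`, since the maximum `M` of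
`|f|` there satisfies `M ≤ |f c| + M / 4`. Applied to `u² + (p u')²` this makes the common zero
set of `u` and `p u'` open and closed in `(0, ∞)`, hence empty, so `h > 0`; applied on a tail
`[T, ∞)` it makes `h` bounded and Cauchy at infinity, with limit at least `2 h(T) / 3`.
-/

open MeasureTheory Set Filter

open Topology intervalIntegral

theorem AbsolutelyContinuousOnInterval.congr {f g : ℝ → ℝ} {a b : ℝ}
    (hf : AbsolutelyContinuousOnInterval f a b) (hfg : EqOn f g (uIcc a b)) :
    AbsolutelyContinuousOnInterval g a b := by
  refine Tendsto.congr' (eventually_inf_principal.mpr (Eventually.of_forall fun E hE => ?_)) hf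
  exact Finset.sum_congr rfl fun i hi => by rw [hfg (hE.1 i hi).1, hfg (hE.1 i hi).2]

theorem MeasureTheory.LocallyIntegrableOn.intervalIntegrable {f : ℝ → ℝ} {S : Set ℝ}
    [S.OrdConnected] (hf : LocallyIntegrableOn f S) {x y : ℝ} (hx : x ∈ S) (hy : y ∈ S) :
    IntervalIntegrable f volume x y :=
  (hf.integrableOn_compact_subset (Set.OrdConnected.uIcc_subset ‹_› hx hy)
    isCompact_uIcc).intervalIntegrable

theorem MeasureTheory.IntegrableAtFilter.exists_Icc_mem_nhds_integral_le {K : ℝ → ℝ} {t ε : ℝ}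
    {U : Set ℝ} (hK : IntegrableAtFilter K (𝓝 t)) (hε : 0 < ε) (hU : U ∈ 𝓝 t) :
    ∃ a b, Icc a b ∈ 𝓝 t ∧ Icc a b ⊆ U ∧ IntervalIntegrable K volume a b ∧
      ∫ s in a..b, K s ≤ ε := by
  obtain ⟨V, hV, hKV⟩ := hK
  obtain ⟨a₀, b₀, ht₀, hnhds₀, hsub₀⟩ := exists_Icc_mem_subset_of_mem_nhds hV
  have hK₀ : ∀ x ∈ Icc a₀ b₀, ∀ y ∈ Icc a₀ b₀, IntervalIntegrable K volume x y :=
    fun x hx y hy => (hKV.mono_set ((uIcc_subset_Icc hx hy).trans hsub₀)).intervalIntegrable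
  have hprim : ContinuousAt (fun s => ∫ x in t..s, K x) t := by
    refine (continuousOn_primitive_interval' (hK₀ a₀ ⟨le_rfl, ht₀.1.trans ht₀.2⟩ b₀
      ⟨ht₀.1.trans ht₀.2, le_rfl⟩) (Icc_subset_uIcc ht₀)).continuousAt ?_
    exact mem_of_superset hnhds₀ Icc_subset_uIcc
  have hsmall : ∀ᶠ s in 𝓝 t, |∫ x in t..s, K x| < ε / 2 := by
    simpa [Real.dist_eq] using hprim.eventually (Metric.ball_mem_nhds _ (half_pos hε))
  obtain ⟨a, b, hta, hnhds, hsub⟩ :=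
    exists_Icc_mem_subset_of_mem_nhds (inter_mem (inter_mem hsmall hU) hnhds₀)
  have hab : a ≤ b := hta.1.trans hta.2
  have ha := hsub ⟨le_rfl, hab⟩
  have hb := hsub ⟨hab, le_rfl⟩
  refine ⟨a, b, hnhds, fun s hs => (hsub hs).1.2, hK₀ a ha.2 b hb.2, ?_⟩
  rw [← integral_interval_sub_left (hK₀ t ht₀ b hb.2) (hK₀ t ht₀ a ha.2)]
  have hKa : |∫ x in t..a, K x| < ε / 2 := ha.1.1
  have hKb : |∫ x in t..b, K x| < ε / 2 := hb.1.1
  linarith [abs_lt.mp hKa, abs_lt.mp hKb]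

theorem MeasureTheory.IntegrableOn.exists_forall_ge_abs_intervalIntegral_lt {g : ℝ → ℝ}
    {a ε : ℝ} (hg : IntegrableOn g (Ioi a)) (hε : 0 < ε) :
    ∃ T, a ≤ T ∧ ∀ s, T ≤ s → |∫ t in T..s, g t| < ε := by
  obtain ⟨N, hN⟩ := Metric.tendsto_atTop.mp
    (intervalIntegral_tendsto_integral_Ioi a hg tendsto_id) (ε / 2) (half_pos hε)
  have hint : ∀ s, a ≤ s → IntervalIntegrable g volume a s := fun s hs =>
    (intervalIntegrable_iff_integrableOn_Ioc_of_le hs).mpr (hg.mono_set Ioc_subset_Ioi_self)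
  refine ⟨max a N, le_max_left a N, fun s hs => ?_⟩
  have hT := hN _ (le_max_right a N)
  have hs' := hN s ((le_max_right a N).trans hs)
  rw [← integral_interval_sub_left (hint s ((le_max_left a N).trans hs))
    (hint _ (le_max_left a N))]
  rw [Real.dist_eq, id] at hT hs'
  rw [abs_lt] at hT hs' ⊢
  constructor <;> linarith

def IsPrimitiveOn (f f' : ℝ → ℝ) (S : Set ℝ) : Prop :=
  ∀ x ∈ S, ∀ y ∈ S, IntervalIntegrable f' volume x y ∧ f y = f x + ∫ t in x..y, f' t

namespace IsPrimitiveOn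

variable {f g f' g' K : ℝ → ℝ} {S T : Set ℝ} {x y : ℝ}

theorem mono (hf : IsPrimitiveOn f f' S) (hTS : T ⊆ S) : IsPrimitiveOn f f' T :=
  fun x hx y hy => hf x (hTS hx) y (hTS hy)

theorem add (hf : IsPrimitiveOn f f' S) (hg : IsPrimitiveOn g g' S) :
    IsPrimitiveOn (fun t => f t + g t) (fun t => f' t + g' t) S := by
  intro x hx y hy
  obtain ⟨hf', hfy⟩ := hf x hx y hy
  obtain ⟨hg', hgy⟩ := hg x hx y hy
  refine ⟨hf'.add hg', ?_⟩
  dsimp only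
  rw [integral_add hf' hg', hfy, hgy]
  ring

theorem const_sub (hf : IsPrimitiveOn f f' S) (c : ℝ) :
    IsPrimitiveOn (fun t => c - f t) (fun t => -f' t) S := by
  intro x hx y hy
  obtain ⟨hf', hfy⟩ := hf x hx y hy
  refine ⟨hf'.neg, ?_⟩
  dsimp only
  rw [intervalIntegral.integral_neg, hfy]
  ring

section OrdConnected

variable [S.OrdConnected]

theorem eqOn_uIcc (hf : IsPrimitiveOn f f' S) (hx : x ∈ S) (hy : y ∈ S) :
    EqOn f (fun t => f x + ∫ s in x..t, f' s) (uIcc x y) :=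
  fun _ ht => (hf x hx _ (Set.OrdConnected.uIcc_subset ‹_› hx hy ht)).2

theorem absolutelyContinuousOnInterval (hf : IsPrimitiveOn f f' S) (hx : x ∈ S) (hy : y ∈ S) :
    AbsolutelyContinuousOnInterval f x y :=
  (((LipschitzWith.const (f x)).lipschitzOnWith.absolutelyContinuousOnInterval).add
    ((hf x hx y hy).1.absolutelyContinuousOnInterval_intervalIntegral left_mem_uIcc)).congr
    (hf.eqOn_uIcc hx hy).symm

theorem ae_hasDerivAt (hf : IsPrimitiveOn f f' S) (hx : x ∈ S) (hy : y ∈ S) :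
    ∀ᵐ t, t ∈ uIcc x y → HasDerivAt f (f' t) t := by
  have hne : ∀ z : ℝ, ∀ᵐ t, t ≠ z := fun z => by simp [ae_iff, measure_singleton]
  filter_upwards [(hf x hx y hy).1.ae_hasDerivAt_integral, hne x, hne y] with t hderiv htx hty ht
  have hIoo : Ioo (min x y) (max x y) ∈ 𝓝 t :=
    Ioo_mem_nhds (lt_of_le_of_ne ht.1 (by grind)) (lt_of_le_of_ne ht.2 (by grind))
  exact ((hderiv ht x left_mem_uIcc).const_add (f x)).congr_of_eventuallyEq
    (mem_of_superset hIoo (Ioo_subset_Icc_self.trans (hf.eqOn_uIcc hx hy)))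

theorem mul (hf : IsPrimitiveOn f f' S) (hg : IsPrimitiveOn g g' S) :
    IsPrimitiveOn (fun t => f t * g t) (fun t => f' t * g t + f t * g' t) S := by
  intro x hx y hy
  have hfac := hf.absolutelyContinuousOnInterval hx hy
  have hgac := hg.absolutelyContinuousOnInterval hx hy
  refine ⟨((hf x hx y hy).1.mul_continuousOn hgac.continuousOn).add
    ((hg x hx y hy).1.continuousOn_mul hfac.continuousOn), ?_⟩
  have hderiv : ∀ᵐ t, t ∈ uIoc x y →
      deriv f t * g t + f t * deriv g t = f' t * g t + f t * g' t := by
    filter_upwards [hf.ae_hasDerivAt hx hy, hg.ae_hasDerivAt hx hy] with t hft hgt ht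
    rw [(hft (uIoc_subset_uIcc ht)).deriv, (hgt (uIoc_subset_uIcc ht)).deriv]
  dsimp only
  rw [← integral_congr_ae hderiv, hfac.integral_deriv_mul_eq_sub hgac]
  ring

theorem sq (hf : IsPrimitiveOn f f' S) :
    IsPrimitiveOn (fun t => f t ^ 2) (fun t => 2 * f t * f' t) S := by
  convert hf.mul hf using 2 with t <;> ring

end OrdConnected

theorem continuousOn_Icc {a b : ℝ} (hf : IsPrimitiveOn f f' (Icc a b)) (hab : a ≤ b) :
    ContinuousOn f (Icc a b) := by
  simpa only [uIcc_of_le hab] using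
    (hf.absolutelyContinuousOnInterval ⟨le_rfl, hab⟩ ⟨hab, le_rfl⟩).continuousOn

theorem continuousAt {t : ℝ} (hf : IsPrimitiveOn f f' T) (hT : T ∈ 𝓝 t) :
    ContinuousAt f t := by
  obtain ⟨a, b, ht, hnhds, hsub⟩ := exists_Icc_mem_subset_of_mem_nhds hT
  exact ((hf.mono hsub).continuousOn_Icc (ht.1.trans ht.2)).continuousAt hnhds

theorem abs_sub_le_mul_integral {a b c s M : ℝ} (hf : IsPrimitiveOn f f' (Icc a b))
    (hg : IntervalIntegrable g volume a b) (hg0 : ∀ t ∈ Icc a b, 0 ≤ g t)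
    (hbound : ∀ᵐ t, t ∈ Icc a b → |f' t| ≤ g t * |f t|) (hM : ∀ t ∈ Icc a b, |f t| ≤ M)
    (hc : c ∈ Icc a b) (hs : s ∈ Icc a b) :
    |f s - f c| ≤ M * ∫ t in a..b, g t := by
  have hab : a ≤ b := hc.1.trans hc.2
  have hsub : uIoc c s ⊆ Ioc a b := fun t ht =>
    ⟨(le_min hc.1 hs.1).trans_lt ht.1, ht.2.trans (max_le hc.2 hs.2)⟩
  have hf' : IntegrableOn f' (Ioc a b) := (hf a ⟨le_rfl, hab⟩ b ⟨hab, le_rfl⟩).1.1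
  have hdom : ∀ᵐ t ∂volume.restrict (Ioc a b), ‖f' t‖ ≤ M * g t := by
    refine (ae_restrict_iff' measurableSet_Ioc).mpr (hbound.mono fun t ht htI => ?_)
    have htI' := Ioc_subset_Icc_self htI
    calc ‖f' t‖ ≤ g t * |f t| := ht htI'
      _ ≤ M * g t := by
        rw [mul_comm]
        exact mul_le_mul_of_nonneg_right (hM t htI') (hg0 t htI')
  calc |f s - f c| = ‖∫ t in c..s, f' t‖ := by
        rw [(hf c hc s hs).2, add_sub_cancel_left, Real.norm_eq_abs]
    _ ≤ ∫ t in uIoc c s, ‖f' t‖ := norm_integral_le_integral_norm_uIoc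
    _ ≤ ∫ t in Ioc a b, ‖f' t‖ :=
      setIntegral_mono_set hf'.norm (ae_of_all _ fun _ => norm_nonneg _) hsub.eventuallyLE
    _ ≤ ∫ t in Ioc a b, M * g t := integral_mono_ae hf'.norm (hg.1.const_mul M) hdom
    _ = M * ∫ t in a..b, g t := by rw [MeasureTheory.integral_const_mul, integral_of_le hab]

theorem abs_sub_le_div_three {a b c s : ℝ} (hf : IsPrimitiveOn f f' (Icc a b))
    (hg : IntervalIntegrable g volume a b) (hg0 : ∀ t ∈ Icc a b, 0 ≤ g t)
    (hbound : ∀ᵐ t, t ∈ Icc a b → |f' t| ≤ g t * |f t|) (hsmall : ∫ t in a..b, g t ≤ 1 / 4)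
    (hc : c ∈ Icc a b) (hs : s ∈ Icc a b) :
    |f s - f c| ≤ |f c| / 3 := by
  obtain ⟨m, hm, hmax⟩ :=
    isCompact_Icc.exists_isMaxOn ⟨c, hc⟩ (hf.continuousOn_Icc (hc.1.trans hc.2)).abs
  have hclose : ∀ s ∈ Icc a b, |f s - f c| ≤ |f m| / 4 := fun s hs =>
    (hf.abs_sub_le_mul_integral hg hg0 hbound (fun t ht => hmax ht) hc hs).trans
      (by nlinarith [abs_nonneg (f m)])
  linarith [hclose s hs, hclose m hm, abs_sub_abs_le_abs_sub (f m) (f c)]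

theorem eventually_eq_zero {t : ℝ} (hf : IsPrimitiveOn f f' S) (hS : S ∈ 𝓝 t)
    (hK : IntegrableAtFilter K (𝓝 t)) (hK0 : ∀ s ∈ S, 0 ≤ K s)
    (hbound : ∀ᵐ s, s ∈ S → |f' s| ≤ K s * |f s|) (hft : f t = 0) :
    ∀ᶠ s in 𝓝 t, f s = 0 := by
  obtain ⟨a, b, hnhds, hsub, hKab, hsmall⟩ :=
    hK.exists_Icc_mem_nhds_integral_le (by norm_num : (0 : ℝ) < 1 / 4) hS
  filter_upwards [hnhds] with s hs
  have := (hf.mono hsub).abs_sub_le_div_three hKab (fun r hr => hK0 r (hsub hr))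
    (hbound.mono fun r h hr => h (hsub hr)) hsmall (mem_of_mem_nhds hnhds) hs
  rwa [hft, sub_zero, abs_zero, zero_div, abs_nonpos_iff] at this

theorem eqOn_zero_of_eq_zero {t : ℝ} (hf : IsPrimitiveOn f f' S) (hSo : IsOpen S)
    (hSc : IsPreconnected S) (hK : LocallyIntegrableOn K S) (hK0 : ∀ s ∈ S, 0 ≤ K s)
    (hbound : ∀ᵐ s, s ∈ S → |f' s| ≤ K s * |f s|) (ht : t ∈ S) (hft : f t = 0) :
    EqOn f 0 S := by
  have hloc : ∀ s ∈ S, f s = 0 → ∀ᶠ r in 𝓝 s, f r = 0 := fun s hs hfs =>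
    hf.eventually_eq_zero (hSo.mem_nhds hs) (hSo.nhdsWithin_eq hs ▸ hK s hs) hK0 hbound hfs
  have hsub : S ⊆ {s | ∀ᶠ r in 𝓝 s, f r = 0} := by
    refine hSc.subset_of_closure_inter_subset isOpen_setOfPred_eventually_nhds
      ⟨t, ht, hloc t ht hft⟩ fun s ⟨hscl, hs⟩ => hloc s hs ?_
    exact tendsto_nhds_unique_of_frequently_eq (hf.continuousAt (hSo.mem_nhds hs))
      tendsto_const_nhds ((mem_closure_iff_frequently.mp hscl).mono fun r hr => hr.self_of_nhds)
  exact fun s hs => (hsub hs).self_of_nhds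

theorem exists_tendsto_atTop {a M : ℝ} (hf : IsPrimitiveOn f f' (Ici a))
    (hg : IntegrableOn g (Ioi a)) (hg0 : ∀ t, a ≤ t → 0 ≤ g t)
    (hbound : ∀ᵐ t, a ≤ t → |f' t| ≤ g t * |f t|) (hM : ∀ t, a ≤ t → |f t| ≤ M) :
    ∃ L, Tendsto f atTop (𝓝 L) := by
  refine cauchySeq_tendsto_of_complete (Metric.cauchySeq_iff'.mpr fun ε hε => ?_)
  have hM0 : 0 ≤ M := (abs_nonneg _).trans (hM a le_rfl)
  obtain ⟨N, haN, hN⟩ :=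
    hg.exists_forall_ge_abs_intervalIntegral_lt (div_pos hε (by linarith : 0 < M + 1))
  refine ⟨N, fun n hn => ?_⟩
  have hsub : Icc N n ⊆ Ici a := fun r hr => haN.trans hr.1
  have hgI : IntervalIntegrable g volume N n := (intervalIntegrable_iff_integrableOn_Ioc_of_le
    hn).mpr (hg.mono_set fun r hr => haN.trans_lt hr.1)
  rw [Real.dist_eq]
  calc |f n - f N| ≤ M * ∫ t in N..n, g t :=
        (hf.mono hsub).abs_sub_le_mul_integral hgI (fun r hr => hg0 r (hsub hr))
          (hbound.mono fun r h hr => h (hsub hr)) (fun r hr => hM r (hsub hr)) ⟨le_rfl, hn⟩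
          ⟨hn, le_rfl⟩
    _ ≤ M * (ε / (M + 1)) := by gcongr; exact (le_abs_self _).trans (hN n hn).le
    _ < ε := by rw [mul_div_assoc', div_lt_iff₀ (by linarith)]; nlinarith

theorem exists_pos_tendsto {a : ℝ} (hf : IsPrimitiveOn f f' (Ici a))
    (hg : IntegrableOn g (Ioi a)) (hg0 : ∀ t, a ≤ t → 0 ≤ g t)
    (hbound : ∀ᵐ t, a ≤ t → |f' t| ≤ g t * |f t|) (hpos : ∀ t, a ≤ t → 0 < f t) :
    ∃ L, 0 < L ∧ Tendsto f atTop (𝓝 L) := by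
  obtain ⟨T, haT, hT⟩ :=
    hg.exists_forall_ge_abs_intervalIntegral_lt (by norm_num : (0 : ℝ) < 1 / 4)
  have hnear : ∀ s, T ≤ s → |f s - f T| ≤ f T / 3 := fun s hs => by
    have hsub : Icc T s ⊆ Ici a := fun r hr => haT.trans hr.1
    have hgI : IntervalIntegrable g volume T s := (intervalIntegrable_iff_integrableOn_Ioc_of_le
      hs).mpr (hg.mono_set fun r hr => haT.trans_lt hr.1)
    simpa only [abs_of_pos (hpos T haT)] using (hf.mono hsub).abs_sub_le_div_three hgI
      (fun r hr => hg0 r (hsub hr)) (hbound.mono fun r h hr => h (hsub hr))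
      ((le_abs_self _).trans (hT s hs).le) ⟨le_rfl, hs⟩ ⟨hs, le_rfl⟩
  obtain ⟨L, hL⟩ := (hf.mono (Ici_subset_Ici.mpr haT)).exists_tendsto_atTop (M := 2 * f T)
    (hg.mono_set (Ioi_subset_Ioi haT)) (fun t ht => hg0 t (haT.trans ht))
    (hbound.mono fun t h ht => h (haT.trans ht)) fun t ht => by
      rw [abs_of_pos (hpos t (haT.trans ht))]
      linarith [(abs_le.mp (hnear t ht)).2, hpos T haT]
  have hlow : ∀ᶠ s in atTop, 2 / 3 * f T ≤ f s :=
    (eventually_ge_atTop T).mono fun s hs => by linarith [abs_le.mp (hnear s hs)]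
  exact ⟨L, by linarith [ge_of_tendsto hL hlow, hpos T haT], hL⟩

end IsPrimitiveOn

theorem abs_two_mul_add_two_mul_le (u w p a : ℝ) :
    |2 * u * (w / p) + 2 * w * (a * u)| ≤ (|1 / p| + |a|) * |u ^ 2 + w ^ 2| := by
  have hamgm := two_mul_le_add_sq |u| |w|
  rw [sq_abs, sq_abs] at hamgm
  calc |2 * u * (w / p) + 2 * w * (a * u)| ≤ |2 * u * (w / p)| + |2 * w * (a * u)| :=
        abs_add_le _ _
    _ = (|1 / p| + |a|) * (2 * |u| * |w|) := by
        rw [div_eq_mul_one_div w p]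
        simp only [abs_mul, abs_two]
        ring
    _ ≤ (|1 / p| + |a|) * |u ^ 2 + w ^ 2| := by
        rw [abs_of_nonneg (add_nonneg (sq_nonneg u) (sq_nonneg w))]
        exact mul_le_mul_of_nonneg_left hamgm (by positivity)

namespace IsSolutionOnReal

variable {p q r u du : ℝ → ℝ} {S : Set ℝ} {lam : ℝ}

theorem isPrimitiveOn [S.OrdConnected] (hu : IsSolutionOnReal p q r S lam u du)
    (hp : LocallyIntegrableOn (fun t => 1 / p t) S) (hq : LocallyIntegrableOn q S)
    (hr : LocallyIntegrableOn r S) :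
    IsPrimitiveOn u (fun t => du t / p t) S ∧
      IsPrimitiveOn du (fun t => (q t - lam * r t) * u t) S := by
  obtain ⟨hu, hdu, hsol⟩ := hu
  refine ⟨fun x hx y hy => ⟨?_, (hsol x hx y hy).1⟩, fun x hx y hy => ⟨?_, (hsol x hx y hy).2⟩⟩
  · simpa only [one_div_mul_eq_div] using (hp.intervalIntegrable hx hy).mul_continuousOn
      (hdu.mono (Set.OrdConnected.uIcc_subset ‹_› hx hy))
  · exact ((hq.intervalIntegrable hx hy).sub ((hr.intervalIntegrable hx hy).const_mul lam)
      ).mul_continuousOn (hu.mono (Set.OrdConnected.uIcc_subset ‹_› hx hy))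

theorem sq_add_sq_pos (hu : IsSolutionOnReal p q r S lam u du) (hSo : IsOpen S)
    (hSc : IsPreconnected S) (hp : LocallyIntegrableOn (fun t => 1 / p t) S)
    (hq : LocallyIntegrableOn q S) (hr : LocallyIntegrableOn r S) (hne : ∃ x ∈ S, u x ≠ 0)
    {t : ℝ} (ht : t ∈ S) :
    0 < u t ^ 2 + du t ^ 2 := by
  have := hSc.ordConnected
  obtain ⟨hu', hdu'⟩ := hu.isPrimitiveOn hp hq hr
  obtain ⟨x, hx, hux⟩ := hne
  have hK : LocallyIntegrableOn (fun t => |1 / p t| + |q t - lam * r t|) S :=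
    hp.norm.add (hq.sub (hr.smul lam)).norm
  refine (add_nonneg (sq_nonneg _) (sq_nonneg _)).lt_of_ne fun h => hux ?_
  have hzero : u x ^ 2 + du x ^ 2 = 0 := (hu'.sq.add hdu'.sq).eqOn_zero_of_eq_zero hSo hSc hK
    (fun _ _ => by positivity) (ae_of_all _ fun s _ => abs_two_mul_add_two_mul_le _ _ _ _) ht
    h.symm hx
  exact pow_eq_zero_iff two_ne_zero |>.mp (by nlinarith [sq_nonneg (u x), sq_nonneg (du x)])

end IsSolutionOnReal

theorem mul_sq_add_sq_pos {a u w : ℝ} (ha : 0 < a) (h : 0 < u ^ 2 + w ^ 2) :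
    0 < a * u ^ 2 + w ^ 2 := by
  nlinarith [min_le_left a 1, min_le_right a 1, mul_pos (lt_min ha one_pos) h, sq_nonneg u,
    sq_nonneg w]

theorem abs_energy_deriv_le {lam ε p r q₁ q₂ dq₂ u w : ℝ} (hlam : 0 < lam) (hεlt : ε < lam)
    (hq₂ : |q₂| ≤ ε) :
    |-dq₂ * u ^ 2 + (lam - q₂) * (2 * u * (w / p)) + 2 * w * ((q₁ + q₂ - lam * r) * u)| ≤
      (|dq₂| / (lam - ε) + |q₁| / √(lam - ε) +
        ((lam + ε) * |1 - 1 / p| + lam * |1 - r|) / √(lam - ε)) *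
        ((lam - q₂) * u ^ 2 + w ^ 2) := by
  obtain ⟨hq₂l, hq₂u⟩ := abs_le.mp hq₂
  have hκ : 0 < lam - ε := sub_pos.mpr hεlt
  have hsκ : 0 < √(lam - ε) := Real.sqrt_pos.mpr hκ
  set H := (lam - q₂) * u ^ 2 + w ^ 2
  set B := q₁ + (lam - q₂) * (1 / p - 1) + lam * (1 - r)
  have hH : 0 ≤ H := by nlinarith [sq_nonneg u, sq_nonneg w]
  have hu2 : u ^ 2 ≤ H / (lam - ε) := by
    rw [le_div_iff₀ hκ]
    nlinarith [sq_nonneg u, sq_nonneg w]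
  have huw : 2 * |u| * |w| ≤ H / √(lam - ε) := by
    rw [le_div_iff₀ hsκ]
    have hamgm := two_mul_le_add_sq (√(lam - ε) * |u|) |w|
    rw [mul_pow, Real.sq_sqrt hκ.le, sq_abs, sq_abs] at hamgm
    nlinarith [sq_nonneg u]
  have hB : |B| ≤ |q₁| + (lam + ε) * |1 - 1 / p| + lam * |1 - r| := by
    have h1 : |(lam - q₂) * (1 / p - 1)| ≤ (lam + ε) * |1 - 1 / p| := by
      rw [abs_mul, abs_sub_comm (1 / p)]
      exact mul_le_mul_of_nonneg_right (abs_le.mpr ⟨by linarith, by linarith⟩) (abs_nonneg _)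
    have h2 : |lam * (1 - r)| = lam * |1 - r| := by rw [abs_mul, abs_of_pos hlam]
    linarith [abs_add_le (q₁ + (lam - q₂) * (1 / p - 1)) (lam * (1 - r)),
      abs_add_le q₁ ((lam - q₂) * (1 / p - 1))]
  have hid : -dq₂ * u ^ 2 + (lam - q₂) * (2 * u * (w / p)) + 2 * w * ((q₁ + q₂ - lam * r) * u) =
      -dq₂ * u ^ 2 + 2 * u * w * B := by
    simp only [B, div_eq_mul_one_div w p]
    ring
  calc _ = |-dq₂ * u ^ 2 + 2 * u * w * B| := by rw [hid]
    _ ≤ |dq₂| * u ^ 2 + 2 * |u| * |w| * |B| := by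
        refine (abs_add_le _ _).trans_eq ?_
        simp only [abs_mul, abs_neg, abs_two, abs_of_nonneg (sq_nonneg u)]
    _ ≤ |dq₂| * (H / (lam - ε)) +
        H / √(lam - ε) * (|q₁| + (lam + ε) * |1 - 1 / p| + lam * |1 - r|) := by
        have := div_nonneg hH hsκ.le
        gcongr
    _ = _ := by ring

theorem weidmann_gronwall_estimate_general
    (p q r : ℝ → ℝ)
    -- basic assumptions on the coefficients, on (0,∞)
    (hploc : LocallyIntegrableOn (fun t => 1 / p t) (Set.Ioi (0:ℝ)))
    (hqloc : LocallyIntegrableOn q (Set.Ioi (0:ℝ)))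
    (hrloc : LocallyIntegrableOn r (Set.Ioi (0:ℝ)))
    -- the coefficients are asymptotically Schrödinger-like
    (c : ℝ) (hc : 0 < c)
    (hpint : IntegrableOn (fun t => 1 - 1 / p t) (Set.Ioi c))
    (hrint : IntegrableOn (fun t => 1 - r t) (Set.Ioi c))
    -- `q = q₁ + q₂` with `q₁ ∈ L¹((c,∞))`, `q₂` locally AC, `q₂' ∈ L¹((c,∞))`, `q₂ → 0`
    (q₁ q₂ dq₂ : ℝ → ℝ)
    (hqdec : ∀ x ∈ Set.Ioi (0:ℝ), q x = q₁ x + q₂ x)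
    (hq₁int : IntegrableOn q₁ (Set.Ioi c))
    (hq₂AC : ∀ x ∈ Set.Ioi (0:ℝ), ∀ y ∈ Set.Ioi (0:ℝ), q₂ y = q₂ x + ∫ t in x..y, dq₂ t)
    (hdq₂int : IntegrableOn dq₂ (Set.Ioi c))
    -- `λ`, `ε` and `t₀`
    (lam ε t₀ : ℝ) (hlam : 0 < lam) (hεlt : ε < lam)
    (ht₀ : c ≤ t₀) (hq₂small : ∀ t : ℝ, t₀ ≤ t → |q₂ t| ≤ ε)
    -- `u`: a nonzero real solution of `τ u = λ u`
    (u du : ℝ → ℝ) (hu : IsSolutionOnReal p q r (Set.Ioi (0:ℝ)) lam u du)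
    (hune : ∃ x ∈ Set.Ioi (0:ℝ), u x ≠ 0)
    -- `h` and `g`
    (h g : ℝ → ℝ)
    (hh : h = fun t => (lam - q₂ t) * u t ^ 2 + (du t) ^ 2)
    (hg : g = fun t => |dq₂ t| / (lam - ε) + |q₁ t| / Real.sqrt (lam - ε) +
      ((lam + ε) * |1 - 1 / p t| + lam * |1 - r t|) / Real.sqrt (lam - ε)) :
    -- conclusions
    (∀ t : ℝ, t₀ ≤ t → 0 < h t) ∧
    IntegrableOn g (Set.Ioi t₀) ∧
    (∃ h' : ℝ → ℝ,
      (∀ x y : ℝ, t₀ ≤ x → t₀ ≤ y → h y = h x + ∫ t in x..y, h' t) ∧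
      (∀ᵐ t : ℝ, t₀ ≤ t → |h' t| ≤ g t * h t)) ∧
    (∃ L : ℝ, 0 < L ∧ Tendsto h atTop (nhds L)) := by
  obtain ⟨hu', hdu'⟩ := hu.isPrimitiveOn hploc hqloc hrloc
  have hsub : Ici t₀ ⊆ Ioi 0 := fun t ht => hc.trans_le (ht₀.trans ht)
  have hq₂' : IsPrimitiveOn q₂ dq₂ (Ici t₀) := fun x hx y hy =>
    ⟨intervalIntegrable_iff.mpr (hdq₂int.mono_set fun t ht =>
      (ht₀.trans (le_min hx hy)).trans_lt ht.1), hq₂AC x (hsub hx) y (hsub hy)⟩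
  set h' : ℝ → ℝ := fun t => -dq₂ t * u t ^ 2 + (lam - q₂ t) * (2 * u t * (du t / p t)) +
    2 * du t * ((q t - lam * r t) * u t)
  have hh' : IsPrimitiveOn h h' (Ici t₀) := by
    rw [hh]
    exact ((hq₂'.const_sub lam).mul (hu'.mono hsub).sq).add (hdu'.mono hsub).sq
  have hpos : ∀ t, t₀ ≤ t → 0 < h t := fun t ht => by
    rw [hh]
    exact mul_sq_add_sq_pos (by linarith [(abs_le.mp (hq₂small t ht)).2])
      (hu.sq_add_sq_pos isOpen_Ioi isPreconnected_Ioi hploc hqloc hrloc hune (hsub ht))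
  have hgint : IntegrableOn g (Ioi t₀) := by
    rw [hg]
    exact IntegrableOn.mono_set (((hdq₂int.abs.div_const _).add (hq₁int.abs.div_const _)).add
      (((hpint.abs.const_mul _).add (hrint.abs.const_mul _)).div_const _)) (Ioi_subset_Ioi ht₀)
  have hbound : ∀ t, t₀ ≤ t → |h' t| ≤ g t * h t := fun t ht => by
    simp only [h', hg, hh, hqdec t (hsub ht)]
    exact abs_energy_deriv_le hlam hεlt (hq₂small t ht)
  refine ⟨hpos, hgint, ⟨h', fun x y hx hy => (hh' x hx y hy).2, ae_of_all _ hbound⟩,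
    hh'.exists_pos_tendsto hgint ?_ (ae_of_all _ fun t ht => ?_) hpos⟩
  · exact fun t ht => nonneg_of_mul_nonneg_left ((abs_nonneg _).trans (hbound t ht)) (hpos t ht)
  · rw [abs_of_pos (hpos t ht)]
    exact hbound t ht

theorem weidmann_gronwall_estimate
    (p q r : ℝ → ℝ)
    -- basic assumptions on the coefficients, on (0,∞)
    (hpm : Measurable p) (hqm : Measurable q) (hrm : Measurable r)
    (hp : ∀ x ∈ Set.Ioi (0:ℝ), 0 < p x) (hr : ∀ x ∈ Set.Ioi (0:ℝ), 0 < r x)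
    (hploc : LocallyIntegrableOn (fun t => 1 / p t) (Set.Ioi (0:ℝ)))
    (hqloc : LocallyIntegrableOn q (Set.Ioi (0:ℝ)))
    (hrloc : LocallyIntegrableOn r (Set.Ioi (0:ℝ)))
    -- the coefficients are asymptotically Schrödinger-like
    (c : ℝ) (hc : 0 < c)
    (hpint : IntegrableOn (fun t => 1 - 1 / p t) (Set.Ioi c))
    (hrint : IntegrableOn (fun t => 1 - r t) (Set.Ioi c))
    -- `q = q₁ + q₂` with `q₁ ∈ L¹((c,∞))`, `q₂` locally AC, `q₂' ∈ L¹((c,∞))`, `q₂ → 0`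
    (q₁ q₂ dq₂ : ℝ → ℝ)
    (hqdec : ∀ x ∈ Set.Ioi (0:ℝ), q x = q₁ x + q₂ x)
    (hq₁int : IntegrableOn q₁ (Set.Ioi c))
    (hq₂AC : ∀ x ∈ Set.Ioi (0:ℝ), ∀ y ∈ Set.Ioi (0:ℝ), q₂ y = q₂ x + ∫ t in x..y, dq₂ t)
    (hdq₂int : IntegrableOn dq₂ (Set.Ioi c))
    (hq₂lim : Tendsto q₂ atTop (nhds 0))
    -- `λ`, `ε` and `t₀`
    (lam ε t₀ : ℝ) (hlam : 0 < lam) (hε : 0 < ε) (hεlt : ε < lam)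
    (ht₀ : c ≤ t₀) (hq₂small : ∀ t : ℝ, t₀ ≤ t → |q₂ t| ≤ ε)
    -- `u`: a nonzero real solution of `τ u = λ u`
    (u du : ℝ → ℝ) (hu : IsSolutionOnReal p q r (Set.Ioi (0:ℝ)) lam u du)
    (hune : ∃ x ∈ Set.Ioi (0:ℝ), u x ≠ 0)
    -- `h` and `g`
    (h g : ℝ → ℝ)
    (hh : h = fun t => (lam - q₂ t) * u t ^ 2 + (du t) ^ 2)
    (hg : g = fun t => |dq₂ t| / (lam - ε) + |q₁ t| / Real.sqrt (lam - ε) +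
      ((lam + ε) * |1 - 1 / p t| + lam * |1 - r t|) / Real.sqrt (lam - ε)) :
    -- conclusions
    (∀ t : ℝ, t₀ ≤ t → 0 < h t) ∧
    IntegrableOn g (Set.Ioi t₀) ∧
    (∃ h' : ℝ → ℝ,
      (∀ x y : ℝ, t₀ ≤ x → t₀ ≤ y → h y = h x + ∫ t in x..y, h' t) ∧
      (∀ᵐ t : ℝ, t₀ ≤ t → |h' t| ≤ g t * h t)) ∧
    (∃ L : ℝ, 0 < L ∧ Tendsto h atTop (nhds L)) :=
  weidmann_gronwall_estimate_general p q r hploc hqloc hrloc c hc hpint hrint q₁ q₂ dq₂ hqdec hq₁int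
    hq₂AC hdq₂int lam ε t₀ hlam hεlt ht₀ hq₂small u du hu hune h g hh hg
end

section
/- (Transfer matrix for the radial Laplacian of a homogeneous tree) Let b > 0 and λ > 0. Suppose u : (0,∞) → ℂ is continuous, is twice differentiable with u''(x) = −λ u(x) on each open interval (n, n+1) for integers n ≥ 0, the one-sided derivatives u'(n−) and u'(n+) exist for every integer n ≥ 1 with u'(n−) = b · u'(n+), and u'(0+) and u(0+) exist. Then for every integer n ≥ 0, the vector (u'(n+), u(n+))ᵀ equals M(λ)ⁿ (u'(0+), u(0+))ᵀ, where M(λ) is the 2×2 matrix with first row ( cos(√λ)/b , −(√λ/b) sin(√λ) ) and second row ( sin(√λ)/√λ , cos(√λ) ). -/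
/-!
On an edge `(n, n + 1)` the functions `w± = u' ± i√λ u` solve `w±' = ± i√λ w±`, so
`w±((n + 1)-) = e^{± i√λ} w±(n+)`. Adding and subtracting these two relations rotates
`(u'(n+), √λ u(n+))` by the angle `√λ` into `(u'((n + 1)-), √λ u((n + 1)-))`. Continuity of `u`
and the matching condition `u'((n + 1)-) = b u'((n + 1)+)` turn this rotation into one
application of `M(λ)`, and induction on `n` concludes.
-/

open Set Filter Topology Complex
open scoped Matrix

theorem eq_of_tendsto_of_hasDerivAt_zero {E : Type*} [NormedAddCommGroup E] [NormedSpace ℝ E]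
    {g : ℝ → E} {a c : ℝ} {A B : E} (hac : a < c)
    (hg : ∀ x ∈ Ioo a c, HasDerivAt g 0 x)
    (hA : Tendsto g (𝓝[>] a) (𝓝 A)) (hB : Tendsto g (𝓝[<] c) (𝓝 B)) : A = B := by
  obtain ⟨C, hC⟩ := isOpen_Ioo.exists_is_const_of_deriv_eq_zero isPreconnected_Ioo
    (fun x hx => (hg x hx).differentiableAt.differentiableWithinAt)
    (fun x hx => (hg x hx).deriv)
  have hA' : Tendsto g (𝓝[>] a) (𝓝 C) :=
    tendsto_const_nhds.congr' (eventually_of_mem (Ioo_mem_nhdsGT hac) fun x hx => (hC x hx).symm)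
  have hB' : Tendsto g (𝓝[<] c) (𝓝 C) :=
    tendsto_const_nhds.congr' (eventually_of_mem (Ioo_mem_nhdsLT hac) fun x hx => (hC x hx).symm)
  exact (tendsto_nhds_unique hA hA').trans (tendsto_nhds_unique hB' hB)

theorem eq_exp_mul_of_tendsto_of_hasDerivAt_mul {f : ℝ → ℂ} {k : ℂ} {a c : ℝ} {A B : ℂ}
    (hac : a < c) (hf : ∀ x ∈ Ioo a c, HasDerivAt f (k * f x) x)
    (hA : Tendsto f (𝓝[>] a) (𝓝 A)) (hB : Tendsto f (𝓝[<] c) (𝓝 B)) :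
    B = exp (k * (c - a)) * A := by
  set e : ℝ → ℂ := fun x => exp (-k * (x - a))
  have he : ∀ x, HasDerivAt e (-k * e x) x := fun x => by
    simpa [e, mul_comm] using
      (((hasDerivAt_id x).ofReal_comp.sub_const (a : ℂ)).const_mul (-k)).cexp
  have he_cont : Continuous e := by fun_prop
  have hder : ∀ x ∈ Ioo a c, HasDerivAt (fun y => e y * f y) 0 x := fun x hx =>
    ((he x).mul (hf x hx)).congr_deriv (by ring)
  have hconst := eq_of_tendsto_of_hasDerivAt_zero hac hder
    ((he_cont.tendsto a).mono_left nhdsWithin_le_nhds |>.mul hA)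
    ((he_cont.tendsto c).mono_left nhdsWithin_le_nhds |>.mul hB)
  simp only [e, sub_self, mul_zero, exp_zero, one_mul] at hconst
  rw [hconst, ← mul_assoc, ← exp_add]
  simp

theorem harmonic_oscillator_transfer {u du : ℝ → ℂ} {s : ℂ} {a c : ℝ} {U₀ D₀ U₁ D₁ : ℂ}
    (hac : a < c)
    (hu : ∀ x ∈ Ioo a c, HasDerivAt u (du x) x)
    (hdu : ∀ x ∈ Ioo a c, HasDerivAt du (-s ^ 2 * u x) x)
    (hU₀ : Tendsto u (𝓝[>] a) (𝓝 U₀)) (hD₀ : Tendsto du (𝓝[>] a) (𝓝 D₀))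
    (hU₁ : Tendsto u (𝓝[<] c) (𝓝 U₁)) (hD₁ : Tendsto du (𝓝[<] c) (𝓝 D₁)) :
    D₁ = D₀ * cos (s * (c - a)) - s * U₀ * sin (s * (c - a)) ∧
      s * U₁ = D₀ * sin (s * (c - a)) + s * U₀ * cos (s * (c - a)) := by
  have hplus := eq_exp_mul_of_tendsto_of_hasDerivAt_mul (f := fun x => du x + s * I * u x)
    (k := s * I) hac
    (fun x hx => ((hdu x hx).add ((hu x hx).const_mul (s * I))).congr_deriv
      (by linear_combination (-s ^ 2 * u x) * I_sq))
    (hD₀.add (hU₀.const_mul (s * I))) (hD₁.add (hU₁.const_mul (s * I)))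
  have hminus := eq_exp_mul_of_tendsto_of_hasDerivAt_mul (f := fun x => du x - s * I * u x)
    (k := -(s * I)) hac
    (fun x hx => ((hdu x hx).sub ((hu x hx).const_mul (s * I))).congr_deriv
      (by linear_combination (-s ^ 2 * u x) * I_sq))
    (hD₀.sub (hU₀.const_mul (s * I))) (hD₁.sub (hU₁.const_mul (s * I)))
  set θ := s * (c - a)
  rw [show s * I * (c - a) = θ * I by ring, exp_mul_I] at hplus
  rw [show -(s * I) * (c - a) = -θ * I by ring, exp_mul_I, cos_neg, sin_neg] at hminus
  constructor
  · linear_combination (hplus + hminus) / 2 + (s * U₀ * sin θ) * I_sq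
  · linear_combination
      (-I / 2) * (hplus - hminus) + (s * U₁ - s * U₀ * cos θ - D₀ * sin θ) * I_sq

theorem tendsto_nhdsLT_of_continuousAt_of_tendsto_nhdsGT {α β : Type*} [TopologicalSpace α]
    [LinearOrder α] [OrderTopology α] [DenselyOrdered α] [NoMaxOrder α] [TopologicalSpace β]
    [T2Space β] {f : α → β} {x : α} {L : β} (hf : ContinuousAt f x)
    (hL : Tendsto f (𝓝[>] x) (𝓝 L)) : Tendsto f (𝓝[<] x) (𝓝 L) := by
  rw [tendsto_nhds_unique hL (hf.mono_left nhdsWithin_le_nhds)]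
  exact hf.mono_left nhdsWithin_le_nhds

theorem transfer_matrix_mulVec {K : Type*} [Field K] {b s c σ D U D' U' : K} (hb : b ≠ 0)
    (hs : s ≠ 0) (hD' : b * D' = D * c - s * U * σ) (hU' : s * U' = D * σ + s * U * c) :
    !![c / b, -(s / b) * σ; σ / s, c] *ᵥ ![D, U] = ![D', U'] := by
  simp only [Matrix.cons_mulVec, Matrix.empty_mulVec, Matrix.vec2_dotProduct']
  refine Matrix.vec2_eq ?_ ?_
  · field_simp
    linear_combination -hD'
  · field_simp
    linear_combination -hU'

theorem homogeneous_tree_transfer_matrix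
    (b lam : ℝ) (hb : 0 < b) (hlam : 0 < lam)
    (u du : ℝ → ℂ)
    -- `u` is continuous on (0,∞)
    (hucont : ContinuousOn u (Set.Ioi (0:ℝ)))
    -- on each interval (n, n+1) `u` is twice differentiable with `u'' = -λ u`
    (hderiv : ∀ n : ℕ, ∀ x ∈ Set.Ioo (n : ℝ) (n + 1), HasDerivAt u (du x) x)
    (hode : ∀ n : ℕ, ∀ x ∈ Set.Ioo (n : ℝ) (n + 1), HasDerivAt du (-(lam : ℂ) * u x) x)
    -- the one-sided limits `u(n+) = U n`, `u'(n+) = D n` and `u'(n-) = Dm n`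
    (U D Dm : ℕ → ℂ)
    (hU : ∀ n : ℕ, Tendsto u (nhdsWithin (n : ℝ) (Set.Ioi (n : ℝ))) (nhds (U n)))
    (hD : ∀ n : ℕ, Tendsto du (nhdsWithin (n : ℝ) (Set.Ioi (n : ℝ))) (nhds (D n)))
    (hDm : ∀ n : ℕ, 1 ≤ n → Tendsto du (nhdsWithin (n : ℝ) (Set.Iio (n : ℝ))) (nhds (Dm n)))
    -- the Kirchhoff matching condition `u'(n-) = b u'(n+)` at every integer `n ≥ 1`
    (hmatch : ∀ n : ℕ, 1 ≤ n → Dm n = (b : ℂ) * D n)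
    -- the transfer matrix
    (M : Matrix (Fin 2) (Fin 2) ℂ)
    (hM : M = !![(Real.cos (Real.sqrt lam) : ℂ) / (b : ℂ),
                 -(((Real.sqrt lam : ℝ) : ℂ) / (b : ℂ)) * ((Real.sin (Real.sqrt lam) : ℝ) : ℂ);
                 ((Real.sin (Real.sqrt lam) : ℝ) : ℂ) / ((Real.sqrt lam : ℝ) : ℂ),
                 ((Real.cos (Real.sqrt lam) : ℝ) : ℂ)]) :
    ∀ n : ℕ, (M ^ n).mulVec ![D 0, U 0] = ![D n, U n] := by
  set s : ℝ := Real.sqrt lam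
  have hs : (s : ℂ) ≠ 0 := ofReal_ne_zero.mpr (Real.sqrt_pos.mpr hlam).ne'
  have hlam_sq : (lam : ℂ) = (s : ℂ) ^ 2 := by rw [← ofReal_pow, Real.sq_sqrt hlam.le]
  have edge_transfer : ∀ n : ℕ, (b : ℂ) * D (n + 1) = D n * Real.cos s - s * U n * Real.sin s ∧
      s * U (n + 1) = D n * Real.sin s + s * U n * Real.cos s := by
    intro n
    have hU_left : Tendsto u (𝓝[<] ((n : ℝ) + 1)) (𝓝 (U (n + 1))) := by
      refine tendsto_nhdsLT_of_continuousAt_of_tendsto_nhdsGT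
        (hucont.continuousAt (Ioi_mem_nhds (by positivity))) ?_
      exact_mod_cast hU (n + 1)
    have hD_left : Tendsto du (𝓝[<] ((n : ℝ) + 1)) (𝓝 (Dm (n + 1))) := by
      exact_mod_cast hDm (n + 1) (Nat.le_add_left 1 n)
    have hedge := harmonic_oscillator_transfer (s := s) (lt_add_one (n : ℝ)) (hderiv n)
      (fun x hx => hlam_sq ▸ hode n x hx) (hU n) (hD n) hU_left hD_left
    simpa [← hmatch (n + 1) (Nat.le_add_left 1 n)] using hedge
  intro n
  induction n with
  | zero => simp
  | succ n ih =>
    rw [pow_succ', ← Matrix.mulVec_mulVec, ih, hM]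
    obtain ⟨hD_succ, hU_succ⟩ := edge_transfer n
    exact transfer_matrix_mulVec (ofReal_ne_zero.mpr hb.ne') hs hD_succ hU_succ
end
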